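/- arXiv:1811.03357 — 7 statements merged into one kernel-verified Lean document; each statement's English description precedes it below -/
import Mathlib

section
/- Let 𝒜 and 𝒜' be ordered point configurations of n points in ℤ^d (n ≥ d+1) with the same volume vector (w_{i₁,…,i_{d+1}}). If gcd over all (d+1)-subsets of the entries w_{i₁,…,i_{d+1}} equals 1, then there is an affine map t(x) = Mx + b with M ∈ GL_d(ℤ) and b ∈ ℤ^d mapping p_j to p'_j for all j. -/
/-! Lift each point to `(1, p j) ∈ ℤ^(d+1)` and let `P`, `Q` be the `(d+1) × n` matrices of lifted
points, so that the volume vectors are the maximal minors of `P` and `Q`. By Cramer's rule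
`adj(P_s) P` is expressed through minors of `P` alone, hence `Q_s adj(P_s) P = det(P_s) Q` for every
choice `s` of `d + 1` columns. Summing these against Bézout coefficients of the coprime minors gives
`U` with `U P = Q`, and symmetrically `V` with `V Q = P`; the same coefficients give a right inverse
of `P`, so `V U = 1` and `U` is unimodular. As the first rows of `P` and `Q` both consist of ones,
`U` has first row `(1, 0)`, i.e. it is the homogenization of an affine map `x ↦ M x + b`. -/

/-- The entry of the volume vector of an ordered point configuration `p` in `ℤ^d`
corresponding to a selection `s` of `d+1` indices: the determinant of the matrix
whose columns are `(1, p (s c))`. -/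
def volVecEntry {d n : ℕ} (p : Fin n → Fin d → ℤ) (s : Fin (d + 1) → Fin n) : ℤ :=
  Matrix.det (Matrix.of fun r c : Fin (d + 1) =>
    Fin.cases (motive := fun _ => ℤ) 1 (fun r' => p (s c) r') r)

open Matrix

theorem Ideal.span_range_eq_top_of_forall_dvd_isUnit {R ι : Type*} [CommRing R]
    [IsPrincipalIdealRing R] (f : ι → R) (h : ∀ k, (∀ i, k ∣ f i) → IsUnit k) :
    Ideal.span (Set.range f) = ⊤ := by
  obtain ⟨g, hg⟩ := (IsPrincipalIdealRing.principal (Ideal.span (Set.range f))).principal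
  rw [hg, Ideal.submodule_span_eq, Ideal.span_singleton_eq_top]
  refine h g fun i => Ideal.mem_span_singleton.1 ?_
  rw [← Ideal.submodule_span_eq, ← hg]
  exact Ideal.subset_span ⟨i, rfl⟩

namespace Matrix

variable {R ι : Type*} {m : ℕ}

theorem updateCol_submatrix_id [DecidableEq ι] (P : Matrix (Fin m) ι R) (s : Fin m → ι)
    (i : Fin m) (j : ι) :
    (P.submatrix id s).updateCol i (fun r => P r j) = P.submatrix id (Function.update s i j) := by
  ext r c
  by_cases h : c = i <;> simp [h]

variable [CommRing R]

theorem det_submatrix_eq_of_strictMono [LinearOrder ι] {P Q : Matrix (Fin m) ι R}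
    (h : ∀ s : Fin m → ι, StrictMono s → (P.submatrix id s).det = (Q.submatrix id s).det)
    (s : Fin m → ι) : (P.submatrix id s).det = (Q.submatrix id s).det := by
  by_cases hs : Function.Injective s
  · set σ := Tuple.sort s
    have hsort : StrictMono (s ∘ σ) :=
      (Tuple.monotone_sort s).strictMono_of_injective (hs.comp σ.injective)
    have hunsort (M : Matrix (Fin m) ι R) :
        (M.submatrix id s).det = Equiv.Perm.sign σ.symm * (M.submatrix id (s ∘ σ)).det := by
      rw [← det_permute', submatrix_submatrix, Function.comp_assoc, σ.self_comp_symm]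
      rfl
    rw [hunsort, hunsort, h _ hsort]
  · obtain ⟨i, j, hij, hne⟩ := Function.not_injective_iff.1 hs
    rw [det_zero_of_column_eq hne (fun k => by simp [hij]),
      det_zero_of_column_eq hne (fun k => by simp [hij])]

section Minors

variable [DecidableEq ι]

theorem submatrix_mul_adjugate_mul {P Q : Matrix (Fin m) ι R}
    (h : ∀ s : Fin m → ι, (P.submatrix id s).det = (Q.submatrix id s).det) (s : Fin m → ι) :
    Q.submatrix id s * (P.submatrix id s).adjugate * P = (P.submatrix id s).det • Q := by
  have hcramer (j : ι) :
      (P.submatrix id s).cramer (fun r => P r j) = (Q.submatrix id s).cramer (fun r => Q r j) := by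
    funext i
    rw [cramer_apply, cramer_apply, updateCol_submatrix_id, updateCol_submatrix_id, h]
  have hcol (j : ι) : (Q.submatrix id s * (P.submatrix id s).adjugate) *ᵥ (fun r => P r j) =
      (P.submatrix id s).det • fun r => Q r j := by
    rw [← mulVec_mulVec, ← cramer_eq_adjugate_mulVec, hcramer, mulVec_cramer, h]
  ext r j
  simpa [mul_apply, mulVec, dotProduct] using congrFun (hcol j) r

variable [Fintype ι]

theorem mul_submatrix_id_one (P : Matrix (Fin m) ι R) (s : Fin m → ι) :
    P * (1 : Matrix ι ι R).submatrix id s = P.submatrix id s := by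
  ext r c
  simp [mul_apply, one_apply]

theorem exists_mul_eq_of_det_submatrix_eq {P Q : Matrix (Fin m) ι R}
    (hP : Ideal.span (Set.range fun s : Fin m → ι => (P.submatrix id s).det) = ⊤)
    (h : ∀ s : Fin m → ι, (P.submatrix id s).det = (Q.submatrix id s).det) :
    ∃ U : Matrix (Fin m) (Fin m) R, U * P = Q := by
  obtain ⟨c, hc⟩ := Ideal.mem_span_range_iff_exists_fun.1 (hP ▸ Submodule.mem_top (x := 1))
  refine ⟨∑ s, c s • (Q.submatrix id s * (P.submatrix id s).adjugate), ?_⟩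
  simp_rw [Matrix.sum_mul, Matrix.smul_mul, submatrix_mul_adjugate_mul h, smul_smul,
    ← Finset.sum_smul, hc, one_smul]

theorem exists_mul_eq_one_of_span_det_submatrix {P : Matrix (Fin m) ι R}
    (hP : Ideal.span (Set.range fun s : Fin m → ι => (P.submatrix id s).det) = ⊤) :
    ∃ S : Matrix ι (Fin m) R, P * S = 1 := by
  obtain ⟨c, hc⟩ := Ideal.mem_span_range_iff_exists_fun.1 (hP ▸ Submodule.mem_top (x := 1))
  refine ⟨∑ s, c s • ((1 : Matrix ι ι R).submatrix id s * (P.submatrix id s).adjugate), ?_⟩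
  simp_rw [Matrix.mul_sum, Matrix.mul_smul, ← Matrix.mul_assoc, mul_submatrix_id_one,
    mul_adjugate, smul_smul, ← Finset.sum_smul, hc, one_smul]

end Minors

theorem row_eq_single_of_mul_eq {n : Type*} [Fintype n] [DecidableEq n] [Fintype ι]
    {P Q : Matrix n ι R} {U : Matrix n n R} {S : Matrix ι n R} (hU : U * P = Q) (hS : P * S = 1) {i : n}
    (hi : Q i = P i) : U i = Pi.single i 1 := by
  have hQS : U = Q * S := by rw [← hU, Matrix.mul_assoc, hS, Matrix.mul_one]
  ext k
  rw [hQS, mul_apply, hi, ← mul_apply, hS]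
  simp [one_apply, Pi.single_apply, eq_comm]

theorem det_eq_det_submatrix_succ_of_row_zero {d : ℕ} {U : Matrix (Fin (d + 1)) (Fin (d + 1)) R}
    (hU : U 0 = Pi.single 0 1) : U.det = (U.submatrix Fin.succ Fin.succ).det := by
  rw [det_succ_row_zero, Fin.sum_univ_succ, Finset.sum_eq_zero fun j _ => ?_]
  · simp [hU, submatrix]
  · simp [hU, Fin.succ_ne_zero]

end Matrix

def homogenize {R : Type*} [One R] {d n : ℕ} (p : Fin n → Fin d → R) :
    Matrix (Fin (d + 1)) (Fin n) R :=
  of fun r j => Fin.cons (α := fun _ => R) 1 (p j) r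

theorem volVecEntry_eq_det_homogenize {d n : ℕ} (p : Fin n → Fin d → ℤ) (s : Fin (d + 1) → Fin n) :
    volVecEntry p s = ((homogenize p).submatrix id s).det :=
  rfl

theorem mul_homogenize_apply {R κ : Type*} [CommRing R] {d n : ℕ}
    (U : Matrix κ (Fin (d + 1)) R) (p : Fin n → Fin d → R) (r : κ) (j : Fin n) :
    (U * homogenize p) r j = (U.submatrix id Fin.succ *ᵥ p j) r + U r 0 := by
  simp [homogenize, mul_apply, Fin.sum_univ_succ, mulVec, dotProduct, add_comm]

theorem stmt2_general (d n : ℕ) (p q : Fin n → Fin d → ℤ)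
    (hW : ∀ s : Fin (d + 1) → Fin n, StrictMono s → volVecEntry p s = volVecEntry q s)
    (hgcd : ∀ k : ℤ, (∀ s : Fin (d + 1) → Fin n, StrictMono s → k ∣ volVecEntry p s) →
      IsUnit k) :
    ∃ (M : Matrix (Fin d) (Fin d) ℤ) (b : Fin d → ℤ),
      IsUnit M.det ∧ ∀ j : Fin n, M.mulVec (p j) + b = q j := by
  simp only [volVecEntry_eq_det_homogenize] at hW hgcd
  set P := homogenize p
  set Q := homogenize q
  have hdet : ∀ s, (P.submatrix id s).det = (Q.submatrix id s).det :=
    det_submatrix_eq_of_strictMono hW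
  have hP : Ideal.span (Set.range fun s => (P.submatrix id s).det) = ⊤ :=
    Ideal.span_range_eq_top_of_forall_dvd_isUnit _ fun k hk => hgcd k fun s _ => hk s
  have hQ : Ideal.span (Set.range fun s => (Q.submatrix id s).det) = ⊤ := by
    simpa only [hdet] using hP
  obtain ⟨U, hU⟩ := exists_mul_eq_of_det_submatrix_eq hP hdet
  obtain ⟨V, hV⟩ := exists_mul_eq_of_det_submatrix_eq hQ fun s => (hdet s).symm
  obtain ⟨S, hS⟩ := exists_mul_eq_one_of_span_det_submatrix hP
  have hVU : V * U = 1 :=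
    calc V * U = V * U * (P * S) := by rw [hS, Matrix.mul_one]
      _ = V * (U * P) * S := by simp only [Matrix.mul_assoc]
      _ = 1 := by rw [hU, hV, hS]
  have hU0 : U 0 = Pi.single 0 1 := row_eq_single_of_mul_eq hU hS rfl
  refine ⟨U.submatrix Fin.succ Fin.succ, fun i => U i.succ 0, ?_, fun j => funext fun i => ?_⟩
  · rw [← det_eq_det_submatrix_succ_of_row_zero hU0]
    exact isUnit_det_of_left_inverse hVU
  · exact (mul_homogenize_apply U p i.succ j).symm.trans (congrFun (congrFun hU i.succ) j)

/-- If two ordered configurations of `n ≥ d+1` points in `ℤ^d` have the same volume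
vector, and the gcd of all the entries of the volume vector is `1`, then there is a
unimodular affine map `x ↦ Mx + b` (with `M ∈ GL_d(ℤ)`, `b ∈ ℤ^d`) sending one
configuration to the other, respecting the order of points. -/
theorem stmt2 (d n : ℕ) (hn : d + 1 ≤ n) (p q : Fin n → Fin d → ℤ)
    (hW : ∀ s : Fin (d + 1) → Fin n, StrictMono s → volVecEntry p s = volVecEntry q s)
    (hgcd : ∀ k : ℤ, (∀ s : Fin (d + 1) → Fin n, StrictMono s → k ∣ volVecEntry p s) →
      IsUnit k) :
    ∃ (M : Matrix (Fin d) (Fin d) ℤ) (b : Fin d → ℤ),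
      IsUnit M.det ∧ ∀ j : Fin n, M.mulVec (p j) + b = q j :=
  stmt2_general d n p q hW hgcd
end

section
/- Up to unimodular equivalence, there are finitely many d-dimensional lattice simplices with normalized volume at most K, for any fixed positive integers d and K. -/
/-!
A lattice simplex with vertices `v 0, …, v d` is a translate of the image of the standard simplex
under its edge matrix `A` (columns `v (q+1) - v 0`), so its volume is a fixed positive multiple of
`|det A|`, and a unimodular map `M` acts on it by `A ↦ M A`. It therefore suffices that the
nonsingular integer matrices with `|det A| ≤ K` fall into finitely many orbits under left
multiplication by `GL_d(ℤ)`. Such an orbit is determined by the row lattice `ℤ^d A`, which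
contains `det A • ℤ^d` (by the adjugate) and hence `K! • ℤ^d`; so it is determined by its image in
`(ℤ/K!)^d`, and there are finitely many of those.
-/

open MeasureTheory

/-- Coercion of an integer point to a real point. -/
noncomputable def toR {d : ℕ} (x : Fin d → ℤ) : Fin d → ℝ := fun i => (x i : ℝ)

open Matrix Set Pointwise

namespace Matrix

variable {n m : Type*} [Fintype n] [DecidableEq n] [Fintype m] [DecidableEq m]

theorem exists_vecMul_eq_det_smul {R : Type*} [CommRing R] (A : Matrix n n R) (x : n → R) :
    ∃ c, c ᵥ* A = A.det • x :=
  ⟨x ᵥ* adjugate A, by rw [vecMul_vecMul, adjugate_mul, vecMul_smul, vecMul_one]⟩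

/-- The row lattice `ℤᵐ A` of an integer matrix, reduced modulo `N`. -/
def rowLatticeMod (N : ℕ) (A : Matrix m n ℤ) : Set (n → ZMod N) :=
  range fun c : m → ℤ => fun j => ((c ᵥ* A) j : ZMod N)

theorem exists_vecMul_eq_of_intCast_eq {A : Matrix n n ℤ} {N : ℕ} (hN : A.det ∣ N)
    {y c : n → ℤ} (hyc : ∀ j, (y j : ZMod N) = ((c ᵥ* A) j : ZMod N)) :
    ∃ c', c' ᵥ* A = y := by
  have hdvd j : (N : ℤ) ∣ (c ᵥ* A) j - y j := (ZMod.intCast_eq_intCast_iff_dvd_sub _ _ _).1 (hyc j)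
  choose z hz using hdvd
  obtain ⟨k, hk⟩ := hN
  obtain ⟨c₁, hc₁⟩ := A.exists_vecMul_eq_det_smul (k • z)
  refine ⟨c - c₁, ?_⟩
  ext j
  have := congrFun hc₁ j
  simp only [sub_vecMul, Pi.sub_apply, Pi.smul_apply, smul_eq_mul] at this ⊢
  rw [this, ← mul_assoc, ← hk, ← hz]
  ring

theorem exists_mul_eq_of_rowLatticeMod_subset {A : Matrix n n ℤ} {B : Matrix m n ℤ} {N : ℕ}
    (hN : A.det ∣ N) (hBA : rowLatticeMod N B ⊆ rowLatticeMod N A) : ∃ C, C * A = B := by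
  have hrow i : ∃ c, c ᵥ* A = B i := by
    obtain ⟨c, hc⟩ := hBA ⟨Pi.single i 1, rfl⟩
    refine exists_vecMul_eq_of_intCast_eq (c := c) hN fun j => ?_
    simpa [single_one_vecMul] using (congrFun hc j).symm
  choose C hC using hrow
  exact ⟨of C, funext fun i => hC i⟩

theorem isUnit_det_of_mul_eq_of_mul_eq {R : Type*} [CommRing R] [IsDomain R]
    {A B C C' : Matrix n n R} (hA : A.det ≠ 0) (hC : C * A = B) (hC' : C' * B = A) :
    IsUnit C.det := by
  have h : C'.det * C.det * A.det = 1 * A.det := by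
    rw [← det_mul, ← det_mul, Matrix.mul_assoc, hC, hC', one_mul]
  exact IsUnit.of_mul_eq_one_right _ (mul_right_cancel₀ hA h)

theorem exists_isUnit_det_mul_eq_of_rowLatticeMod_eq {A B : Matrix n n ℤ} {N : ℕ}
    (hA : A.det ≠ 0) (hAN : A.det ∣ N) (hBN : B.det ∣ N)
    (h : rowLatticeMod N A = rowLatticeMod N B) : ∃ M, IsUnit M.det ∧ M * A = B := by
  obtain ⟨C, hC⟩ := exists_mul_eq_of_rowLatticeMod_subset hAN h.ge
  obtain ⟨C', hC'⟩ := exists_mul_eq_of_rowLatticeMod_subset hBN h.le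
  exact ⟨C, isUnit_det_of_mul_eq_of_mul_eq hA hC hC', hC⟩

theorem exists_finset_isUnit_det_mul_eq (K : ℕ) :
    ∃ T : Finset (Matrix n n ℤ), ∀ A : Matrix n n ℤ, A.det ≠ 0 → A.det.natAbs ≤ K →
      ∃ B ∈ T, ∃ M, IsUnit M.det ∧ M * A = B := by
  set D := {A : Matrix n n ℤ | A.det ≠ 0 ∧ A.det ∣ (K.factorial : ℤ)}
  have : NeZero K.factorial := ⟨K.factorial_ne_zero⟩
  have hfin : (rowLatticeMod K.factorial '' D).Finite := Set.toFinite _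
  let rep := Function.invFunOn (rowLatticeMod K.factorial) D
  refine ⟨(hfin.image rep).toFinset, fun A hA hK => ?_⟩
  have hAD : A ∈ D :=
    ⟨hA, Int.natAbs_dvd_natAbs.1 (Nat.dvd_factorial (Int.natAbs_pos.2 hA) hK)⟩
  have hex : ∃ B ∈ D, rowLatticeMod K.factorial B = rowLatticeMod K.factorial A := ⟨A, hAD, rfl⟩
  obtain ⟨M, hM, hMA⟩ := exists_isUnit_det_mul_eq_of_rowLatticeMod_eq hA hAD.2
    (Function.invFunOn_mem hex).2 (Function.invFunOn_eq hex).symm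
  exact ⟨_, (hfin.image rep).mem_toFinset.2 ⟨_, ⟨A, hAD, rfl⟩, rfl⟩, M, hM, hMA⟩

end Matrix

def stdVertex (R : Type*) [CommRing R] (d : ℕ) : Fin (d + 1) → Fin d → R :=
  Fin.cons 0 fun q => Pi.single q 1

section Simplex

variable {R : Type*} [CommRing R] {d : ℕ}

def edgeMatrix (v : Fin (d + 1) → Fin d → R) : Matrix (Fin d) (Fin d) R :=
  of fun p q => v q.succ p - v 0 p

theorem edgeMatrix_mulVec_stdVertex (v : Fin (d + 1) → Fin d → R) (i : Fin (d + 1)) :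
    edgeMatrix v *ᵥ stdVertex R d i = v i - v 0 := by
  induction i using Fin.cases with
  | zero => simp [stdVertex]
  | succ q => ext p; simp [stdVertex, edgeMatrix]

theorem mulVec_sub_mulVec_zero (M : Matrix (Fin d) (Fin d) R) (v : Fin (d + 1) → Fin d → R)
    (i : Fin (d + 1)) : M *ᵥ v i + -(M *ᵥ v 0) = (M * edgeMatrix v) *ᵥ stdVertex R d i := by
  rw [← mulVec_mulVec, edgeMatrix_mulVec_stdVertex, mulVec_sub, sub_eq_add_neg]

theorem det_edgeMatrix_toR (v : Fin (d + 1) → Fin d → ℤ) :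
    (edgeMatrix fun i => toR (v i)).det = (edgeMatrix v).det := by
  rw [Int.cast_det]
  congr 1
  ext p q
  simp [edgeMatrix, toR]

theorem volume_convexHull_range_eq (w : Fin (d + 1) → Fin d → ℝ) :
    volume (convexHull ℝ (range w)) =
      ENNReal.ofReal |(edgeMatrix w).det| * volume (convexHull ℝ (range (stdVertex ℝ d))) := by
  have hw : range w = w 0 +ᵥ toLin' (edgeMatrix w) '' range (stdVertex ℝ d) := by
    rw [← image_vadd, ← range_comp, ← range_comp]
    congr 1
    ext i
    simp [toLin'_apply, edgeMatrix_mulVec_stdVertex]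
  rw [hw, convexHull_vadd, ← LinearMap.image_convexHull, measure_vadd,
    Measure.addHaar_image_linearMap, LinearMap.det_toLin']

end Simplex

theorem AffineIndependent.measure_convexHull_pos {E ι : Type*} [NormedAddCommGroup E]
    [NormedSpace ℝ E] [FiniteDimensional ℝ E] [MeasurableSpace E] [BorelSpace E]
    (μ : Measure E) [μ.IsAddHaarMeasure] [Fintype ι] {p : ι → E} (hp : AffineIndependent ℝ p)
    (hcard : Fintype.card ι = Module.finrank ℝ E + 1) : 0 < μ (convexHull ℝ (range p)) :=
  Measure.measure_pos_of_nonempty_interior _ <|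
    interior_convexHull_nonempty_iff_affineSpan_eq_top.2 <|
      hp.affineSpan_eq_top_iff_card_eq_finrank_add_one.2 hcard

theorem det_edgeMatrix_ne_zero_and_natAbs_le {d K : ℕ} {v : Fin (d + 1) → Fin d → ℤ}
    (hv : AffineIndependent ℝ fun i => toR (v i))
    (hvol : (d.factorial : ℝ) * (volume (convexHull ℝ (range fun i => toR (v i)))).toReal ≤ K) :
    (edgeMatrix v).det ≠ 0 ∧ (edgeMatrix v).det.natAbs ≤
      ⌊(K : ℝ) / (d.factorial * (volume (convexHull ℝ (range (stdVertex ℝ d)))).toReal)⌋₊ := by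
  set c := volume (convexHull ℝ (range (stdVertex ℝ d)))
  have hc : c ≠ ⊤ := ((finite_range _).isCompact_convexHull ℝ).measure_lt_top.ne
  have hpos := hv.measure_convexHull_pos volume (by simp)
  rw [volume_convexHull_range_eq, det_edgeMatrix_toR] at hpos hvol
  rw [ENNReal.toReal_mul, ENNReal.toReal_ofReal (abs_nonneg _)] at hvol
  obtain ⟨hdet, hc0⟩ := CanonicallyOrderedAdd.mul_pos.1 hpos
  have hdet : (edgeMatrix v).det ≠ 0 := by simpa using hdet
  have hc0 : 0 < c.toReal := ENNReal.toReal_pos hc0.ne' hc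
  refine ⟨hdet, Nat.le_floor ?_⟩
  rw [le_div_iff₀ (by positivity), Nat.cast_natAbs, Int.cast_abs]
  linarith

theorem stmt3_general (d K : ℕ) :
    ∃ T : Finset (Fin (d + 1) → Fin d → ℤ),
      ∀ v : Fin (d + 1) → Fin d → ℤ,
        AffineIndependent ℝ (fun i => toR (v i)) →
        (Nat.factorial d : ℝ) *
            (volume (convexHull ℝ (Set.range fun i => toR (v i)))).toReal ≤ K →
        ∃ w ∈ T, ∃ (M : Matrix (Fin d) (Fin d) ℤ) (b : Fin d → ℤ),
          IsUnit M.det ∧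
          convexHull ℝ (Set.range fun i => toR (M.mulVec (v i) + b)) =
            convexHull ℝ (Set.range fun i => toR (w i)) := by
  obtain ⟨T, hT⟩ := exists_finset_isUnit_det_mul_eq (n := Fin d)
    ⌊(K : ℝ) / (d.factorial * (volume (convexHull ℝ (range (stdVertex ℝ d)))).toReal)⌋₊
  refine ⟨T.image fun B i => B *ᵥ stdVertex ℤ d i, fun v hv hvol => ?_⟩
  obtain ⟨hdet, hle⟩ := det_edgeMatrix_ne_zero_and_natAbs_le hv hvol
  obtain ⟨B, hB, M, hM, rfl⟩ := hT _ hdet hle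
  refine ⟨_, Finset.mem_image_of_mem _ hB, M, -(M *ᵥ v 0), hM, ?_⟩
  simp_rw [mulVec_sub_mulVec_zero]

/-- Up to unimodular equivalence there are finitely many `d`-dimensional lattice
simplices of normalized volume at most `K`: there is a finite set `T` of vertex
tuples such that every `d`-simplex with vertices in `ℤ^d` and normalized volume
at most `K` is mapped onto (the convex hull of) a member of `T` by some affine
unimodular map `x ↦ Mx + b`. -/
theorem stmt3 (d K : ℕ) (hd : 0 < d) (hK : 0 < K) :
    ∃ T : Finset (Fin (d + 1) → Fin d → ℤ),
      ∀ v : Fin (d + 1) → Fin d → ℤ,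
        AffineIndependent ℝ (fun i => toR (v i)) →
        (Nat.factorial d : ℝ) *
            (volume (convexHull ℝ (Set.range fun i => toR (v i)))).toReal ≤ K →
        ∃ w ∈ T, ∃ (M : Matrix (Fin d) (Fin d) ℤ) (b : Fin d → ℤ),
          IsUnit M.det ∧
          convexHull ℝ (Set.range fun i => toR (M.mulVec (v i) + b)) =
            convexHull ℝ (Set.range fun i => toR (w i)) :=
  stmt3_general d K
end

section
/- Up to unimodular equivalence, there are finitely many d-dimensional lattice polytopes with normalized volume at most K, for any fixed positive integers d and K. -/
/-!
Fix `v₀ ∈ V`. Any integer matrix whose columns are differences `v - v₀` with `v ∈ V` spans a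
simplex inside the polytope `P`, so its determinant is at most `d ^ d * vol P ≤ K * d ^ d`.
Choose such a matrix `A` with `det A ≠ 0`. By Cramer's rule every `x - v₀` with `x ∈ V`
equals `A y` with `|y j| ≤ K * d ^ d`. As `det A` divides `(K * d ^ d)!`, the row lattice of
`A` is one of the finitely many lattices containing `(K * d ^ d)! • ℤ^d`, so some unimodular
`M` makes `M * A` one of finitely many matrices. Then `M (x - v₀) = (M * A) y` lies in a box
independent of `V`.
-/

open MeasureTheory

open Matrix Pointwise

namespace Matrix

variable {m n R : Type*} [Fintype n]

theorem exists_mul_eq_of_range_vecMulLinear_le [Fintype m] [DecidableEq m] [CommSemiring R]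
    {A : Matrix n n R} {B : Matrix m n R}
    (h : LinearMap.range B.vecMulLinear ≤ LinearMap.range A.vecMulLinear) :
    ∃ C : Matrix m n R, C * A = B := by
  have hrow : ∀ i, ∃ c, c ᵥ* A = B i := fun i => h ⟨Pi.single i 1, single_one_vecMul i B⟩
  choose C hC using hrow
  exact ⟨of C, funext hC⟩

variable [DecidableEq n]

theorem exists_isUnit_det_mul_eq_of_range_vecMulLinear_eq [CommRing R] [IsDomain R]
    {A B : Matrix n n R} (hA : A.det ≠ 0)
    (h : LinearMap.range A.vecMulLinear = LinearMap.range B.vecMulLinear) :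
    ∃ M : Matrix n n R, IsUnit M.det ∧ M * A = B := by
  obtain ⟨C, hC⟩ := exists_mul_eq_of_range_vecMulLinear_le h.ge
  obtain ⟨D, hD⟩ := exists_mul_eq_of_range_vecMulLinear_le h.le
  have hDC : D.det * C.det * A.det = 1 * A.det := by
    rw [← det_mul, ← det_mul, mul_assoc, hC, hD, one_mul]
  exact ⟨C, IsUnit.of_mul_eq_one_right _ (mul_right_cancel₀ hA hDC), hC⟩

theorem smul_mem_range_vecMulLinear_of_det_dvd [CommRing R] (A : Matrix n n R) {k : R}
    (hk : A.det ∣ k) (z : n → R) : k • z ∈ LinearMap.range A.vecMulLinear := by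
  obtain ⟨t, rfl⟩ := hk
  refine ⟨t • z ᵥ* adjugate A, ?_⟩
  simp [vecMul_vecMul, adjugate_mul, vecMul_smul, smul_smul, mul_comm]

end Matrix

theorem Submodule.finite_setOf_smul_mem {ι : Type*} [Fintype ι] {k : ℤ} (hk : 0 < k) :
    {L : Submodule ℤ (ι → ℤ) | ∀ z, k • z ∈ L}.Finite := by
  set cube : Set (ι → ℤ) := {y | ∀ i, y i ∈ Set.Ico 0 k}
  have hmem : ∀ L ∈ {L : Submodule ℤ (ι → ℤ) | ∀ z, k • z ∈ L}, ∀ z,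
      z ∈ L ↔ (fun i => z i % k) ∈ cube ∩ L := by
    intro L hL z
    have hmod : (fun i => z i % k) = z - k • fun i => z i / k := by
      funext i; simp [Int.emod_def]
    have hcube : (fun i => z i % k) ∈ cube :=
      fun i => ⟨Int.emod_nonneg _ hk.ne', Int.emod_lt_of_pos _ hk⟩
    rw [Set.mem_inter_iff, and_iff_right hcube, SetLike.mem_coe, hmod,
      L.sub_mem_iff_left (hL _)]
  refine Set.Finite.of_finite_image (f := fun L => cube ∩ L) ?_ fun L hL L' hL' h => ?_
  · exact (Set.Finite.pi' fun _ => Set.finite_Ico _ _).finite_subsets.subset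
      (by rintro _ ⟨L, -, rfl⟩; exact Set.inter_subset_left)
  · ext z
    rw [hmem L hL, hmem L' hL', show cube ∩ (L : Set (ι → ℤ)) = cube ∩ L' from h]

theorem Matrix.exists_isUnit_det_mul_abs_le (n : Type*) [Fintype n] [DecidableEq n] (k : ℕ) :
    ∃ N : ℤ, ∀ A : Matrix n n ℤ, A.det ≠ 0 → |A.det| ≤ k →
      ∃ M : Matrix n n ℤ, IsUnit M.det ∧ ∀ i j, |(M * A) i j| ≤ N := by
  set S := {A : Matrix n n ℤ | A.det ≠ 0 ∧ |A.det| ≤ k}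
  set lat : Matrix n n ℤ → Submodule ℤ (n → ℤ) := fun A => LinearMap.range A.vecMulLinear
  have hfin : (lat '' S).Finite := by
    refine (Submodule.finite_setOf_smul_mem (k := k.factorial) (by positivity)).subset ?_
    rintro _ ⟨A, ⟨hA, hAk⟩, rfl⟩ z
    have hdvd : A.det.natAbs ∣ k.factorial :=
      Nat.dvd_factorial (Int.natAbs_pos.mpr hA) (by rw [Int.abs_eq_natAbs] at hAk; omega)
    exact A.smul_mem_range_vecMulLinear_of_det_dvd (Int.natAbs_dvd.mp (by exact_mod_cast hdvd)) z
  obtain ⟨F, -, hF, hFS⟩ := Set.exists_subset_image_finite_and (p := (· = lat '' S)) |>.mp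
    ⟨lat '' S, subset_rfl, hfin, rfl⟩
  obtain ⟨N, hN⟩ :=
    (hF.biUnion fun B _ => Set.finite_range fun p : n × n => |B p.1 p.2|).bddAbove
  refine ⟨N, fun A hA hAk => ?_⟩
  obtain ⟨B, hBF, hBA⟩ : lat A ∈ lat '' F := hFS ▸ Set.mem_image_of_mem lat ⟨hA, hAk⟩
  obtain ⟨M, hM, rfl⟩ := exists_isUnit_det_mul_eq_of_range_vecMulLinear_eq hA hBA.symm
  exact ⟨M, hM, fun i j => hN (Set.mem_biUnion hBF ⟨(i, j), rfl⟩)⟩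

theorem Matrix.abs_mulVec_apply_le {m n α : Type*} [Fintype n] [CommRing α] [LinearOrder α]
    [IsStrictOrderedRing α] (B : Matrix m n α) (c : n → α) {N C : α}
    (hB : ∀ i j, |B i j| ≤ N) (hc : ∀ j, |c j| ≤ C) (i : m) :
    |(B *ᵥ c) i| ≤ Fintype.card n * (N * C) := by
  calc |(B *ᵥ c) i| ≤ ∑ j, |B i j| * |c j| := by
        simpa only [mulVec, dotProduct, abs_mul] using
          Finset.abs_sum_le_sum_abs (fun j => B i j * c j) Finset.univ
  _ ≤ ∑ _j : n, N * C := Finset.sum_le_sum fun j _ =>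
        mul_le_mul (hB i j) (hc j) (abs_nonneg _) ((abs_nonneg _).trans (hB i j))
  _ = _ := by simp

theorem Matrix.abs_mulVec_apply_le_of_abs_det_updateCol_le {n : Type*} [Fintype n]
    [DecidableEq n] {A M : Matrix n n ℤ} (hA : A.det ≠ 0) {N C : ℤ}
    (hMA : ∀ i j, |(M * A) i j| ≤ N) {w : n → ℤ} (hw : ∀ j, |(A.updateCol j w).det| ≤ C)
    (i : n) : |(M *ᵥ w) i| ≤ Fintype.card n * (N * C) := by
  have hcramer : A.det • M *ᵥ w = (M * A) *ᵥ A.cramer w := by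
    rw [← mulVec_mulVec, mulVec_cramer, mulVec_smul]
  calc |(M *ᵥ w) i| ≤ |A.det| * |(M *ᵥ w) i| :=
        le_mul_of_one_le_left (abs_nonneg _) (Int.one_le_abs hA)
  _ = |((M * A) *ᵥ A.cramer w) i| := by rw [← hcramer, Pi.smul_apply, smul_eq_mul, abs_mul]
  _ ≤ _ := abs_mulVec_apply_le _ _ hMA (fun j => by rw [cramer_apply]; exact hw j) i

theorem Convex.add_sum_smul_mem {E ι : Type*} [AddCommGroup E] [Module ℝ E] [Fintype ι]
    {s : Set E} (hs : Convex ℝ s) {x : E} (hx : x ∈ s) {w : ι → ℝ} {z : ι → E}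
    (hw₀ : ∀ i, 0 ≤ w i) (hw₁ : ∑ i, w i ≤ 1) (hz : ∀ i, x + z i ∈ s) :
    x + ∑ i, w i • z i ∈ s := by
  have hmem := hs.sum_mem (t := Finset.univ) (w := fun o : Option ι => o.elim (1 - ∑ i, w i) w)
    (z := fun o : Option ι => o.elim x fun i => x + z i)
    (by rintro (_ | i) -; exacts [sub_nonneg.mpr hw₁, hw₀ i])
    (by simp [Fintype.sum_option]) (by rintro (_ | i) -; exacts [hx, hz i])
  convert hmem using 1
  simp only [Fintype.sum_option, Option.elim, smul_add, Finset.sum_add_distrib,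
    ← Finset.sum_smul, sub_smul, one_smul]
  abel

theorem Matrix.mulVec_eq_sum_smul_col {m n R : Type*} [Fintype n] [CommSemiring R]
    (B : Matrix m n R) (y : n → R) : B *ᵥ y = ∑ j, y j • B.col j := by
  ext i; simp [mulVec, dotProduct, mul_comm]

theorem abs_det_le_pow_mul_volume {d : ℕ} {s : Set (Fin d → ℝ)} (hs : Convex ℝ s)
    (hs_top : volume s ≠ ⊤) {x : Fin d → ℝ} (hx : x ∈ s) (B : Matrix (Fin d) (Fin d) ℝ)
    (hB : ∀ j, x + B.col j ∈ s) : |B.det| ≤ d ^ d * (volume s).toReal := by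
  -- The cube `[0, 1/d]^d` lies in the standard simplex.
  set cube : Set (Fin d → ℝ) := Set.Icc 0 fun _ => (d : ℝ)⁻¹
  have hsub : x +ᵥ toLin' B '' cube ⊆ s := by
    rintro _ ⟨_, ⟨y, hy, rfl⟩, rfl⟩
    change x + B *ᵥ y ∈ s
    rw [mulVec_eq_sum_smul_col]
    refine hs.add_sum_smul_mem hx (fun j => hy.1 j) ?_ hB
    calc ∑ j, y j ≤ ∑ _j : Fin d, (d : ℝ)⁻¹ := Finset.sum_le_sum fun j _ => hy.2 j
    _ ≤ 1 := by simpa using mul_inv_le_one (G₀ := ℝ) (a := d)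
  have hvol : volume (x +ᵥ toLin' B '' cube) = ENNReal.ofReal (|B.det| / d ^ d) := by
    rw [measure_vadd, Measure.addHaar_image_linearMap, LinearMap.det_toLin', Real.volume_Icc_pi]
    simp [div_eq_mul_inv, ENNReal.ofReal_mul, ← ENNReal.ofReal_pow]
  have hle : |B.det| / d ^ d ≤ (volume s).toReal :=
    (ENNReal.ofReal_le_iff_le_toReal hs_top).mp (hvol ▸ measure_mono hsub)
  rcases d.eq_zero_or_pos with rfl | hd
  · simpa using hle
  · rwa [div_le_iff₀' (by positivity)] at hle

theorem toR_add_col_map {d : ℕ} (x : Fin d → ℤ) (C : Matrix (Fin d) (Fin d) ℤ) (j : Fin d) :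
    toR (x + C.col j) = toR x + (C.map (Int.cast : ℤ → ℝ)).col j := by
  ext i; simp [toR]

theorem Matrix.add_col_updateCol_sub_mem {n α : Type*} [DecidableEq n] [AddCommGroup α]
    {V : Set (n → α)} {A : Matrix n n α} {v₀ x : n → α} (hA : ∀ k, v₀ + A.col k ∈ V)
    (hx : x ∈ V) (j k : n) : v₀ + (A.updateCol j (x - v₀)).col k ∈ V := by
  by_cases hkj : k = j
  · rw [show (A.updateCol j (x - v₀)).col k = x - v₀ by ext; simp [col, hkj], add_sub_cancel]
    exact hx
  · rw [show (A.updateCol j (x - v₀)).col k = A.col k by ext; simp [col, hkj]]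
    exact hA k

theorem exists_det_ne_zero_forall_add_col_mem {d : ℕ} {V : Set (Fin d → ℤ)}
    (hV : affineSpan ℝ (toR '' V) = ⊤) {v₀ : Fin d → ℤ} (hv₀ : v₀ ∈ V) :
    ∃ A : Matrix (Fin d) (Fin d) ℤ, A.det ≠ 0 ∧ ∀ j, v₀ + A.col j ∈ V := by
  have hspan : Submodule.span ℝ ((· -ᵥ toR v₀) '' (toR '' V)) = ⊤ := by
    rw [← vectorSpan_eq_span_vsub_set_right ℝ (Set.mem_image_of_mem toR hv₀),
      ← direction_affineSpan, hV, AffineSubspace.direction_top]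
  let b := Module.Basis.ofSpan hspan.ge
  let e := b.reindex (b.indexEquiv (Pi.basisFun ℝ (Fin d)))
  have he : ∀ j, ∃ v ∈ V, toR v - toR v₀ = e j := fun j => by
    obtain ⟨_, ⟨v, hv, rfl⟩, hve⟩ :=
      Module.Basis.ofSpan_subset hspan.ge ⟨_, (b.reindex_apply _ j).symm⟩
    exact ⟨v, hv, hve⟩
  choose v hvV hve using he
  set A : Matrix (Fin d) (Fin d) ℤ := .of fun i j => v j i - v₀ i
  have hAV : ∀ j, v₀ + A.col j = v j := fun j => by ext i; simp [A, col]
  have hcol : (A.map (Int.cast : ℤ → ℝ)).col = e := by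
    ext j i; simp [A, col, ← hve, toR]
  have hunit := linearIndependent_cols_iff_isUnit.mp (hcol ▸ e.linearIndependent)
  refine ⟨A, ?_, fun j => hAV j ▸ hvV j⟩
  rwa [isUnit_iff_isUnit_det, ← Int.cast_det, isUnit_iff_ne_zero, Int.cast_ne_zero] at hunit

theorem abs_det_le_of_add_col_mem {d K : ℕ} {V : Finset (Fin d → ℤ)}
    (hvol : (Nat.factorial d : ℝ) *
      (volume (convexHull ℝ (toR '' (V : Set (Fin d → ℤ))))).toReal ≤ K)
    {v₀ : Fin d → ℤ} (hv₀ : v₀ ∈ V) {C : Matrix (Fin d) (Fin d) ℤ}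
    (hC : ∀ j, v₀ + C.col j ∈ V) : |C.det| ≤ K * d ^ d := by
  set P := convexHull ℝ (toR '' (V : Set (Fin d → ℤ)))
  have hP_top : volume P ≠ ⊤ :=
    (V.finite_toSet.image toR).isCompact_convexHull (𝕜 := ℝ) |>.measure_lt_top.ne
  have hPK : (volume P).toReal ≤ K :=
    le_trans (le_mul_of_one_le_left ENNReal.toReal_nonneg (mod_cast d.factorial_pos)) hvol
  have hmem : ∀ v ∈ V, toR v ∈ P := fun v hv => subset_convexHull ℝ _ ⟨v, hv, rfl⟩
  have hdet := abs_det_le_pow_mul_volume (convex_convexHull ℝ _) hP_top (hmem v₀ hv₀)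
    (C.map Int.cast) fun j => toR_add_col_map v₀ C j ▸ hmem _ (hC j)
  have : ((|C.det| : ℤ) : ℝ) ≤ (K * d ^ d : ℕ) := by
    push_cast; rw [mul_comm]; exact hdet.trans (by gcongr)
  exact_mod_cast this

theorem stmt4_general (d K : ℕ) :
    ∃ T : Finset (Finset (Fin d → ℤ)),
      ∀ V : Finset (Fin d → ℤ),
        affineSpan ℝ (convexHull ℝ (toR '' (V : Set (Fin d → ℤ)))) = ⊤ →
        (Nat.factorial d : ℝ) *
            (volume (convexHull ℝ (toR '' (V : Set (Fin d → ℤ))))).toReal ≤ K →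
        ∃ W ∈ T, ∃ (M : Matrix (Fin d) (Fin d) ℤ) (b : Fin d → ℤ),
          IsUnit M.det ∧
          convexHull ℝ ((fun x => toR (M.mulVec x + b)) '' (V : Set (Fin d → ℤ))) =
            convexHull ℝ (toR '' (W : Set (Fin d → ℤ))) := by
  obtain ⟨N, hN⟩ := exists_isUnit_det_mul_abs_le (Fin d) (K * d ^ d)
  set R : ℤ := d * (N * (K * d ^ d))
  refine ⟨(Finset.Icc (fun _ => -R) fun _ => R).powerset, fun V hspan hvol => ?_⟩
  rw [affineSpan_convexHull] at hspan
  obtain ⟨_, v₀, hv₀, rfl⟩ := AffineSubspace.nonempty_of_affineSpan_eq_top ℝ _ _ hspan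
  obtain ⟨A, hA, hAV⟩ := exists_det_ne_zero_forall_add_col_mem hspan hv₀
  obtain ⟨M, hM, hMA⟩ := hN A hA (mod_cast abs_det_le_of_add_col_mem hvol hv₀ hAV)
  have hbound : ∀ x ∈ V, ∀ i, |(M *ᵥ (x - v₀)) i| ≤ R := by
    intro x hx i
    have hcramer j := abs_det_le_of_add_col_mem hvol hv₀ (add_col_updateCol_sub_mem hAV hx j)
    simpa only [Fintype.card_fin] using
      abs_mulVec_apply_le_of_abs_det_updateCol_le hA hMA (fun j => mod_cast hcramer j) i
  refine ⟨V.image fun x => M *ᵥ x + -(M *ᵥ v₀), ?_, M, -(M *ᵥ v₀), hM,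
    by rw [Finset.coe_image, Set.image_image]⟩
  simp only [Finset.mem_powerset, Finset.image_subset_iff, Finset.mem_Icc, Pi.le_def]
  intro x hx
  rw [← sub_eq_add_neg, ← mulVec_sub]
  exact ⟨fun i => (abs_le.mp (hbound x hx i)).1, fun i => (abs_le.mp (hbound x hx i)).2⟩

/-- Up to unimodular equivalence there are finitely many `d`-dimensional lattice
polytopes of normalized volume at most `K` (Lagarias--Ziegler): there is a finite
set `T` of finite vertex sets such that every full-dimensional lattice polytope in
`ℝ^d` with normalized volume at most `K` is mapped onto (the convex hull of) a
member of `T` by some affine unimodular map `x ↦ Mx + b`. -/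
theorem stmt4 (d K : ℕ) (hd : 0 < d) (hK : 0 < K) :
    ∃ T : Finset (Finset (Fin d → ℤ)),
      ∀ V : Finset (Fin d → ℤ),
        affineSpan ℝ (convexHull ℝ (toR '' (V : Set (Fin d → ℤ)))) = ⊤ →
        (Nat.factorial d : ℝ) *
            (volume (convexHull ℝ (toR '' (V : Set (Fin d → ℤ))))).toReal ≤ K →
        ∃ W ∈ T, ∃ (M : Matrix (Fin d) (Fin d) ℤ) (b : Fin d → ℤ),
          IsUnit M.det ∧
          convexHull ℝ ((fun x => toR (M.mulVec x + b)) '' (V : Set (Fin d → ℤ))) =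
            convexHull ℝ (toR '' (W : Set (Fin d → ℤ))) :=
  stmt4_general d K
end

section
/- A Lawrence prism P in ℝ^d with heights a₀, …, a_{d-1} (nonnegative integers, not all zero) satisfies |P ∩ ℤ^d| = d + Vol(P), where Vol denotes normalized volume; moreover Vol(P) = a₀ + a₁ + ⋯ + a_{d-1}. -/
/-!
Write `x = (y, s)` with `y ∈ ℝ^{d-1}`. The prism is the region `0 ≤ s ≤ h(y)` over the simplex
`Δ = conv(0, e₁, …, e_{d-1})`, where `h = ∑ aᵢ λᵢ(y)` interpolates the heights and `λ(y)` are the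
barycentric coordinates of `y` in `Δ`. Its volume is `∫_Δ h`, and slicing along the last
coordinate integrates any affine function over the corner simplex `{y ≥ 0, ∑ y ≤ r}`, giving
`∑ aᵢ / d!`. A lattice point of the prism has integral, nonnegative barycentric
coordinates summing to `1`, so `λ` is the `i`-th unit vector for some `i` and the point is
`eᵢ + k e_d` with `0 ≤ k ≤ aᵢ`: there are `∑ (aᵢ + 1) = d + ∑ aᵢ` of them.
-/

open MeasureTheory

open Finset
open scoped Nat

namespace LawrencePrism

variable {n : ℕ}

def cornerSimplex (n : ℕ) (r : ℝ) : Set (Fin n → ℝ) := {y | (∀ j, 0 ≤ y j) ∧ ∑ j, y j ≤ r}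

lemma isCompact_cornerSimplex (r : ℝ) : IsCompact (cornerSimplex n r) := by
  have hclosed : IsClosed (cornerSimplex n r) := by
    rw [cornerSimplex, Set.ofPred_and, Set.ofPred_forall]
    exact (isClosed_iInter fun j => isClosed_le continuous_const (continuous_apply j)).inter
      (isClosed_le (continuous_finsetSum _ fun j _ => continuous_apply j) continuous_const)
  refine (isCompact_Icc (a := 0) (b := fun _ => r)).of_isClosed_subset hclosed ?_
  rintro y ⟨hy0, hyr⟩
  exact ⟨hy0, fun j => (single_le_sum (fun j _ => hy0 j) (mem_univ j)).trans hyr⟩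

lemma snoc_mem_cornerSimplex_iff {r s : ℝ} {y : Fin n → ℝ} :
    Fin.snoc y s ∈ cornerSimplex (n + 1) r ↔ 0 ≤ s ∧ y ∈ cornerSimplex n (r - s) := by
  simp only [cornerSimplex, Set.mem_ofPred_eq, Fin.forall_fin_succ', Fin.sum_univ_castSucc,
    Fin.snoc_castSucc, Fin.snoc_last, le_sub_iff_add_le]
  tauto

lemma integral_eq_integral_integral_snoc {f : (Fin (n + 1) → ℝ) → ℝ} (hf : Integrable f) :
    ∫ x, f x = ∫ s, ∫ y, f (Fin.snoc y s) := by
  have he := (volume_preserving_piFinSuccAbove (fun _ : Fin (n + 1) => ℝ) (Fin.last n)).symm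
  rw [← he.integral_comp', Measure.volume_eq_prod, integral_prod]
  · simp only [MeasurableEquiv.piFinSuccAbove_symm_apply, Fin.insertNthEquiv_last]
    rfl
  · exact he.integrable_comp_emb (MeasurableEquiv.measurableEmbedding _) |>.2 hf

lemma volume_eq_lintegral_volume_snoc {R : Set (Fin (n + 1) → ℝ)} (hR : MeasurableSet R) :
    volume R = ∫⁻ y, volume {s | Fin.snoc y s ∈ R} := by
  have he := (volume_preserving_piFinSuccAbove (fun _ : Fin (n + 1) => ℝ) (Fin.last n)).symm
  rw [← he.measure_preimage hR.nullMeasurableSet, Measure.volume_eq_prod,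
    Measure.prod_apply_symm (he.measurable hR)]
  simp only [MeasurableEquiv.piFinSuccAbove_symm_apply, Fin.insertNthEquiv_last]
  rfl

lemma setIntegral_cornerSimplex_succ {f : (Fin (n + 1) → ℝ) → ℝ} (hf : Continuous f) {r : ℝ}
    (hr : 0 ≤ r) :
    ∫ x in cornerSimplex (n + 1) r, f x =
      ∫ s in 0..r, ∫ y in cornerSimplex n (r - s), f (Fin.snoc y s) := by
  have hint := (hf.continuousOn.integrableOn_compact (μ := volume)
    (isCompact_cornerSimplex r)).integrable_indicator
    (isCompact_cornerSimplex r).isClosed.measurableSet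
  rw [← integral_indicator (isCompact_cornerSimplex r).isClosed.measurableSet,
    integral_eq_integral_integral_snoc hint, intervalIntegral.integral_of_le hr,
    ← integral_Icc_eq_integral_Ioc, ← integral_indicator measurableSet_Icc]
  congr 1 with s
  by_cases hs : s ∈ Set.Icc 0 r
  · rw [Set.indicator_of_mem hs,
      ← integral_indicator (isCompact_cornerSimplex _).isClosed.measurableSet]
    classical
    congr 1 with y
    rw [Set.indicator_apply, Set.indicator_apply, snoc_mem_cornerSimplex_iff]
    simp only [hs.1, true_and]
  · have hempty : ∀ y, ¬ (0 ≤ s ∧ y ∈ cornerSimplex n (r - s)) := by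
      rintro y ⟨hs0, hy0, hysum⟩
      exact hs ⟨hs0, by linarith [sum_nonneg fun j (_ : j ∈ univ) => hy0 j]⟩
    simp [Set.indicator, snoc_mem_cornerSimplex_iff, hempty, hs]

lemma setIntegral_cornerSimplex_affine (n : ℕ) {r : ℝ} (hr : 0 ≤ r) (c : ℝ) (w : Fin n → ℝ) :
    ∫ y in cornerSimplex n r, (c + ∑ j, w j * y j) =
      c * r ^ n / n ! + (∑ j, w j) * r ^ (n + 1) / (n + 1)! := by
  induction n generalizing r c with
  | zero =>
    have : cornerSimplex 0 r = Set.univ := by ext y; simp [cornerSimplex, hr]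
    simp [this, measureReal_def, volume_pi]
  | succ n ih =>
    rw [setIntegral_cornerSimplex_succ (by fun_prop) hr]
    have hslice : ∀ s ∈ Set.uIcc 0 r,
        ∫ y in cornerSimplex n (r - s), (c + ∑ j, w j * Fin.snoc (α := fun _ => ℝ) y s j) =
          (c + w (Fin.last n) * s) * (r - s) ^ n / n ! +
            (∑ j : Fin n, w j.castSucc) * (r - s) ^ (n + 1) / (n + 1)! := by
      intro s hs
      rw [Set.uIcc_of_le hr] at hs
      rw [← ih (by linarith [hs.2]) (c + w (Fin.last n) * s) (fun j => w j.castSucc)]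
      congr 1 with y
      simp only [Fin.sum_univ_castSucc, Fin.snoc_castSucc, Fin.snoc_last]
      ring
    rw [intervalIntegral.integral_congr hslice]
    set W := ∑ j : Fin n, w j.castSucc
    set A := (c + w (Fin.last n) * r) / (n ! : ℝ)
    set B := W / (n + 1)! - w (Fin.last n) / (n ! : ℝ)
    have hpoly : ∀ s : ℝ, (c + w (Fin.last n) * s) * (r - s) ^ n / n ! +
        W * (r - s) ^ (n + 1) / (n + 1)! = A * (r - s) ^ n + B * (r - s) ^ (n + 1) := by
      intro s
      simp only [A, B, Nat.factorial_succ, Nat.cast_mul]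
      field_simp
      ring
    simp_rw [hpoly]
    rw [intervalIntegral.integral_comp_sub_left (fun u => A * u ^ n + B * u ^ (n + 1)),
      sub_self, sub_zero, intervalIntegral.integral_add
        (Continuous.intervalIntegrable (by fun_prop) _ _)
        (Continuous.intervalIntegrable (by fun_prop) _ _),
      intervalIntegral.integral_const_mul, intervalIntegral.integral_const_mul, integral_pow,
      integral_pow, Fin.sum_univ_castSucc]
    simp only [A, B, W, Nat.factorial_succ, Nat.cast_mul]
    push_cast
    field_simp
    ring

section Barycentric

variable {R : Type*} [CommRing R]

def bary (y : Fin n → R) : Fin (n + 1) → R := Fin.cons (1 - ∑ j, y j) y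

lemma sum_bary (y : Fin n → R) : ∑ i, bary y i = 1 := by
  simp [bary, Fin.sum_univ_succ]

lemma tail_bary (y : Fin n → R) : Fin.tail (bary y) = y := Fin.tail_cons _ _

lemma bary_tail {μ : Fin (n + 1) → R} (hμ : ∑ i, μ i = 1) : bary (Fin.tail μ) = μ := by
  rw [Fin.sum_univ_succ] at hμ
  rw [bary, ← Fin.cons_self_tail μ, Fin.tail_cons]
  congr 1
  simp only [Fin.tail]
  linear_combination -hμ

lemma map_bary {S : Type*} [CommRing S] (f : R →+* S) (y : Fin n → R) :
    bary (f ∘ y) = f ∘ bary y := by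
  ext i
  cases i using Fin.cases <;> simp [bary]

lemma bary_add_smul {α β : R} (hαβ : α + β = 1) (u v : Fin n → R) :
    bary (α • u + β • v) = α • bary u + β • bary v := by
  ext i
  cases i using Fin.cases
  · simp only [bary, Fin.cons_zero, Pi.add_apply, Pi.smul_apply, smul_eq_mul, sum_add_distrib,
      ← mul_sum]
    linear_combination -hαβ
  · simp [bary]

/-- The point `eᵢ + h e_d` of the paper: `e₀ = 0`, and `eᵢ` (`1 ≤ i < d`) is the unit vector of
coordinate `i - 1`. -/
def vertex (i : Fin (n + 1)) (h : R) : Fin (n + 1) → R :=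
  Fin.snoc (Fin.tail (Pi.single i 1 : Fin (n + 1) → R)) h

lemma init_vertex (i : Fin (n + 1)) (h : R) :
    Fin.init (vertex i h) = Fin.tail (Pi.single i 1 : Fin (n + 1) → R) :=
  Fin.init_snoc _ _

lemma vertex_last (i : Fin (n + 1)) (h : R) : vertex i h (Fin.last n) = h := Fin.snoc_last _ _

lemma bary_init_vertex (i : Fin (n + 1)) (h : R) : bary (Fin.init (vertex i h)) = Pi.single i 1 := by
  rw [init_vertex, bary_tail (by simp)]

lemma vertex_apply (i j : Fin (n + 1)) (h : R) :
    vertex i h j = (if (j : ℕ) + 1 = i then 1 else 0) + (if (j : ℕ) = n then h else 0) := by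
  cases j using Fin.lastCases with
  | last => simp [vertex, i.is_lt.ne']
  | cast j => simp [vertex, Fin.tail, Pi.single_apply, Fin.ext_iff, eq_comm, j.is_lt.ne']

lemma map_vertex {S : Type*} [CommRing S] (f : R →+* S) (i : Fin (n + 1)) (h : R) :
    f ∘ vertex i h = vertex i (f h) := by
  ext j
  cases j using Fin.lastCases <;> simp [vertex, Fin.tail, Pi.single_apply, apply_ite f]

lemma sum_smul_vertex (μ h : Fin (n + 1) → R) :
    ∑ i, μ i • vertex i (h i) = Fin.snoc (Fin.tail μ) (∑ i, μ i * h i) := by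
  ext j
  cases j using Fin.lastCases <;> simp [vertex, Finset.sum_apply, Fin.tail, Pi.single_apply]

end Barycentric

lemma bary_nonneg_iff {y : Fin n → ℝ} : (∀ i, 0 ≤ bary y i) ↔ y ∈ cornerSimplex n 1 := by
  simp [Fin.forall_fin_succ, bary, cornerSimplex, and_comm]

lemma continuous_bary : Continuous (bary : (Fin n → ℝ) → Fin (n + 1) → ℝ) :=
  continuous_pi fun i => i.cases (by simpa [bary] using by fun_prop) fun j => by
    simpa [bary] using continuous_apply j

def height (a : Fin (n + 1) → ℕ) (y : Fin n → ℝ) : ℝ := ∑ i, a i * bary y i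

lemma continuous_height (a : Fin (n + 1) → ℕ) : Continuous (height a) :=
  continuous_finsetSum _ fun i _ => continuous_const.mul ((continuous_apply i).comp continuous_bary)

lemma height_eq_add_sum_mul (a : Fin (n + 1) → ℕ) (y : Fin n → ℝ) :
    height a y = a 0 + ∑ j, ((a j.succ : ℝ) - a 0) * y j := by
  simp only [height, bary, Fin.sum_univ_succ, Fin.cons_zero, Fin.cons_succ, sub_mul, mul_sub,
    sum_sub_distrib, ← mul_sum]
  ring

def prism (a : Fin (n + 1) → ℕ) : Set (Fin (n + 1) → ℝ) :=
  {x | (∀ i, 0 ≤ bary (Fin.init x) i) ∧ 0 ≤ x (Fin.last n) ∧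
    x (Fin.last n) ≤ height a (Fin.init x)}

lemma isClosed_prism (a : Fin (n + 1) → ℕ) : IsClosed (prism a) := by
  have hinit : Continuous (Fin.init : (Fin (n + 1) → ℝ) → Fin n → ℝ) :=
    continuous_pi fun j => continuous_apply _
  rw [prism, Set.ofPred_and, Set.ofPred_and, Set.ofPred_forall]
  exact (isClosed_iInter fun i => isClosed_le continuous_const
    ((continuous_apply i).comp (continuous_bary.comp hinit))).inter
      ((isClosed_le continuous_const (continuous_apply _)).inter
        (isClosed_le (continuous_apply _) ((continuous_height a).comp hinit)))

lemma volume_prism (a : Fin (n + 1) → ℕ) :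
    volume (prism a) = ENNReal.ofReal ((∑ i, (a i : ℝ)) / (n + 1)!) := by
  have hslice : ∀ y, volume {s | Fin.snoc y s ∈ prism a} =
      (cornerSimplex n 1).indicator (fun y => ENNReal.ofReal (height a y)) y := by
    intro y
    by_cases hy : y ∈ cornerSimplex n 1
    · have : {s | Fin.snoc y s ∈ prism a} = Set.Icc 0 (height a y) := by
        ext s
        simp [prism, bary_nonneg_iff, hy]
      rw [this, Real.volume_Icc, sub_zero, Set.indicator_of_mem hy]
    · have : {s | Fin.snoc y s ∈ prism a} = ∅ := by
        ext s
        simp [prism, bary_nonneg_iff, hy]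
      rw [this, measure_empty, Set.indicator_of_notMem hy]
  have hint : IntegrableOn (height a) (cornerSimplex n 1) :=
    (continuous_height a).continuousOn.integrableOn_compact (isCompact_cornerSimplex 1)
  have hnonneg : 0 ≤ᵐ[volume.restrict (cornerSimplex n 1)] height a :=
    (ae_restrict_iff' (isCompact_cornerSimplex 1).isClosed.measurableSet).2 <|
      ae_of_all _ fun y hy => sum_nonneg fun i _ =>
        mul_nonneg (Nat.cast_nonneg _) (bary_nonneg_iff.2 hy i)
  rw [volume_eq_lintegral_volume_snoc (isClosed_prism a).measurableSet, lintegral_congr hslice,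
    lintegral_indicator (isCompact_cornerSimplex 1).isClosed.measurableSet,
    ← ofReal_integral_eq_lintegral_ofReal hint hnonneg]
  simp_rw [height_eq_add_sum_mul]
  rw [setIntegral_cornerSimplex_affine n zero_le_one, Fin.sum_univ_succ, sum_sub_distrib]
  congr 1
  simp only [one_pow, mul_one, sum_const, card_univ, Fintype.card_fin, nsmul_eq_mul,
    Nat.factorial_succ]
  push_cast
  field_simp
  ring

lemma convex_prism (a : Fin (n + 1) → ℕ) : Convex ℝ (prism a) := by
  rintro x ⟨hx, hx0, hxh⟩ y ⟨hy, hy0, hyh⟩ α β hα hβ hαβ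
  have hb : bary (Fin.init (α • x + β • y)) = α • bary (Fin.init x) + β • bary (Fin.init y) :=
    bary_add_smul hαβ _ _
  have hh : height a (Fin.init (α • x + β • y)) =
      α * height a (Fin.init x) + β * height a (Fin.init y) := by
    simp only [height, hb, Pi.add_apply, Pi.smul_apply, smul_eq_mul, mul_sum, ← sum_add_distrib]
    exact sum_congr rfl fun i _ => by ring
  refine ⟨fun i => ?_, ?_, ?_⟩
  · rw [hb]
    exact add_nonneg (mul_nonneg hα (hx i)) (mul_nonneg hβ (hy i))
  · exact add_nonneg (mul_nonneg hα hx0) (mul_nonneg hβ hy0)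
  · rw [hh]
    exact add_le_add (mul_le_mul_of_nonneg_left hxh hα) (mul_le_mul_of_nonneg_left hyh hβ)

lemma vertex_mem_prism (a : Fin (n + 1) → ℕ) (i : Fin (n + 1)) {h : ℝ} (h0 : 0 ≤ h)
    (ha : h ≤ a i) : vertex i h ∈ prism a := by
  refine ⟨fun j => ?_, ?_, ?_⟩ <;>
    simp only [bary_init_vertex, vertex_last, height, Pi.single_apply, mul_ite, mul_one,
      mul_zero, sum_ite_eq', mem_univ, if_true]
  · split_ifs <;> norm_num
  · exact h0
  · exact ha

lemma vertex_mem_segment (i : Fin (n + 1)) (h : ℝ) {t : ℝ} (ht : t ∈ Set.Icc (0 : ℝ) 1) :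
    vertex i (t * h) ∈ segment ℝ (vertex i 0) (vertex i h) := by
  refine ⟨1 - t, t, by linarith [ht.2], ht.1, by ring, ?_⟩
  ext j
  cases j using Fin.lastCases <;> simp [vertex, ← add_mul]

lemma convexHull_vertex_eq_prism (a : Fin (n + 1) → ℕ) :
    convexHull ℝ (Set.range (fun i => vertex i (0 : ℝ)) ∪ Set.range fun i => vertex i (a i : ℝ)) =
      prism a := by
  refine subset_antisymm (convexHull_min ?_ (convex_prism a)) fun x ⟨hx, hx0, hxh⟩ => ?_
  · rintro _ (⟨i, rfl⟩ | ⟨i, rfl⟩)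
    · exact vertex_mem_prism a i le_rfl (Nat.cast_nonneg _)
    · exact vertex_mem_prism a i (Nat.cast_nonneg _) le_rfl
  -- `x` is the combination, with weights `bary (init x)`, of the points at relative height `t`
  -- on the vertical edges
  obtain ⟨s, t, hs, ht, hst, hxt⟩ : x (Fin.last n) ∈ segment ℝ 0 (height a (Fin.init x)) := by
    rw [segment_eq_Icc (hx0.trans hxh)]
    exact ⟨hx0, hxh⟩
  have hsum : x = ∑ i, bary (Fin.init x) i • vertex i (t * a i) := by
    rw [sum_smul_vertex, tail_bary, ← Fin.snoc_init_self x, Fin.init_snoc, ← hxt, smul_zero, zero_add, smul_eq_mul, height, mul_sum]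
    exact congrArg _ (sum_congr rfl fun i _ => by ring)
  rw [hsum]
  refine (convex_convexHull ℝ _).sum_mem (fun i _ => hx i) (sum_bary _) fun i _ => ?_
  exact segment_subset_convexHull (Set.mem_union_left _ (Set.mem_range_self i))
    (Set.mem_union_right _ (Set.mem_range_self i)) (vertex_mem_segment i _ ⟨ht, by linarith⟩)

lemma exists_eq_single_of_sum_eq_one {ι : Type*} [Fintype ι] [DecidableEq ι] {μ : ι → ℤ}
    (hμ : ∀ i, 0 ≤ μ i) (hsum : ∑ i, μ i = 1) : ∃ i, μ = Pi.single i 1 := by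
  obtain ⟨i, -, hi⟩ := exists_ne_zero_of_sum_ne_zero (hsum.trans_ne one_ne_zero)
  have hrest : ∑ j ∈ univ.erase i, μ j = 0 := by
    have := add_sum_erase univ μ (mem_univ i)
    have := sum_nonneg fun j (_ : j ∈ univ.erase i) => hμ j
    have := hμ i
    omega
  refine ⟨i, funext fun j => ?_⟩
  by_cases hj : j = i
  · subst hj
    have := add_sum_erase univ μ (mem_univ j)
    simp only [Pi.single_eq_same]
    omega
  · rw [Pi.single_eq_of_ne hj]
    exact (sum_eq_zero_iff_of_nonneg fun j _ => hμ j).1 hrest j (mem_erase.2 ⟨hj, mem_univ j⟩)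

lemma toR_mem_prism_iff {a : Fin (n + 1) → ℕ} {x : Fin (n + 1) → ℤ} :
    toR x ∈ prism a ↔ ∃ i, ∃ k ≤ a i, x = vertex i (k : ℤ) := by
  have hbary : bary (Fin.init (toR x)) = Int.cast ∘ bary (Fin.init x) :=
    map_bary (Int.castRingHom ℝ) _
  constructor
  · rintro ⟨hx, hx0, hxh⟩
    simp only [hbary, Function.comp_apply, Int.cast_nonneg_iff] at hx
    obtain ⟨i, hi⟩ := exists_eq_single_of_sum_eq_one hx (sum_bary _)
    have hxa : x (Fin.last n) ≤ a i := by
      exact_mod_cast (by simpa [height, hbary, hi, Pi.single_apply, toR] using hxh :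
        (x (Fin.last n) : ℝ) ≤ a i)
    have hx0' : 0 ≤ x (Fin.last n) := by simpa [toR] using hx0
    refine ⟨i, (x (Fin.last n)).toNat, by omega, ?_⟩
    calc x = Fin.snoc (Fin.tail (bary (Fin.init x))) (x (Fin.last n)) := by
          rw [tail_bary, Fin.snoc_init_self]
      _ = _ := by rw [hi, vertex, Int.toNat_of_nonneg hx0']
  · rintro ⟨i, k, hk, rfl⟩
    have : toR (vertex i (k : ℤ)) = vertex i (k : ℝ) :=
      (map_vertex (Int.castRingHom ℝ) i (k : ℤ)).trans (by simp)
    rw [this]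
    exact vertex_mem_prism a i (Nat.cast_nonneg k) (by exact_mod_cast hk)

lemma ncard_toR_mem_prism (a : Fin (n + 1) → ℕ) :
    {x : Fin (n + 1) → ℤ | toR x ∈ prism a}.ncard = (n + 1) + ∑ i, a i := by
  have hinj : Function.Injective fun p : (_ : Fin (n + 1)) × ℕ => vertex p.1 (p.2 : ℤ) := by
    rintro ⟨i, k⟩ ⟨i', k'⟩ h
    have hi : i = i' := by
      simpa [bary_init_vertex, Pi.single_apply] using
        congrFun (congrArg (fun x => bary (Fin.init x)) h) i
    have hk : k = k' := by simpa [vertex_last] using congrFun h (Fin.last n)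
    subst hi hk
    rfl
  have hset : {x | toR x ∈ prism a} =
      ((univ.sigma fun i => range (a i + 1)).image fun p => vertex p.1 (p.2 : ℤ) :) := by
    ext x
    simp [toR_mem_prism_iff, eq_comm]
  rw [hset, Set.ncard_coe_finset, card_image_of_injective _ hinj, card_sigma]
  simp [sum_add_distrib, add_comm]

end LawrencePrism

open LawrencePrism

theorem stmt6_general (d : ℕ) (hd : 0 < d) (a : Fin d → ℕ)
    (base top : Fin d → Fin d → ℝ)
    (hbase : base = fun (i j : Fin d) => if (j : ℕ) + 1 = (i : ℕ) then (1 : ℝ) else 0)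
    (htop : top = fun (i j : Fin d) =>
      (if (j : ℕ) + 1 = (i : ℕ) then (1 : ℝ) else 0) +
      (if (j : ℕ) = d - 1 then (a i : ℝ) else 0))
    (P : Set (Fin d → ℝ))
    (hP : P = convexHull ℝ (Set.range base ∪ Set.range top)) :
    {x : Fin d → ℤ | toR x ∈ P}.ncard = d + ∑ i, a i ∧
    (Nat.factorial d : ℝ) * (volume P).toReal = ∑ i, (a i : ℝ) := by
  obtain ⟨n, rfl⟩ := Nat.exists_eq_add_one_of_ne_zero hd.ne'
  have hbase' : base = fun i => vertex i 0 := by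
    ext i j
    simp [hbase, vertex_apply]
  have htop' : top = fun i => vertex i (a i : ℝ) := by
    ext i j
    simp [htop, vertex_apply]
  rw [hbase', htop', convexHull_vertex_eq_prism] at hP
  subst hP
  refine ⟨ncard_toR_mem_prism a, ?_⟩
  rw [volume_prism, ENNReal.toReal_ofReal (by positivity), mul_div_cancel₀ _ (by positivity)]

/-- A Lawrence prism in `ℝ^d` with heights `a₀, …, a_{d-1}` (nonnegative integers,
not all zero), i.e. the convex hull of `0, a₀e_d, e₁, e₁ + a₁e_d, …, e_{d-1},
e_{d-1} + a_{d-1}e_d`, has exactly `d + Vol(P)` lattice points, and its normalized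
volume equals `a₀ + a₁ + ⋯ + a_{d-1}`. -/
theorem stmt6 (d : ℕ) (hd : 0 < d) (a : Fin d → ℕ) (ha : ∃ i, a i ≠ 0)
    (base top : Fin d → Fin d → ℝ)
    (hbase : base = fun (i j : Fin d) => if (j : ℕ) + 1 = (i : ℕ) then (1 : ℝ) else 0)
    (htop : top = fun (i j : Fin d) =>
      (if (j : ℕ) + 1 = (i : ℕ) then (1 : ℝ) else 0) +
      (if (j : ℕ) = d - 1 then (a i : ℝ) else 0))
    (P : Set (Fin d → ℝ))
    (hP : P = convexHull ℝ (Set.range base ∪ Set.range top)) :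
    {x : Fin d → ℤ | toR x ∈ P}.ncard = d + ∑ i, a i ∧
    (Nat.factorial d : ℝ) * (volume P).toReal = ∑ i, (a i : ℝ) :=
  stmt6_general d hd a base top hbase htop P hP
end

section
/- The three-dimensional ZPW simplex S³_k = conv((0,0,0), (2,0,0), (0,3,0), (0,0,6k+6)) contains exactly k interior lattice points, namely (1,1,a) for 1 ≤ a ≤ k, and has normalized volume 36(k+1). -/
/-!
`S³_k` is the corner simplex `{x ≥ 0, x₀/2 + x₁/3 + x₂/(6k+6) ≤ 1}`. Its interior is cut out by
the strict inequalities, and a lattice point there has `x₀, x₁ ≥ 1`; since `1/2 + 2/3 > 1` and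
`2/2 + 1/3 > 1` this forces `x₀ = x₁ = 1`, after which `x₂/(6k+6) < 1/6` leaves `1 ≤ x₂ ≤ k`.
The volume of a corner simplex with intercepts `c` is `∏ cᵢ / n!`, by slicing along the first
coordinate and induction on the dimension; here it is `2 · 3 · (6k+6) / 6 = 6(k+1)`.
-/

open MeasureTheory

def cornerSimplex {n : ℕ} (c : Fin n → ℝ) (s : ℝ) : Set (Fin n → ℝ) :=
  {x | (∀ i, 0 ≤ x i) ∧ ∑ i, x i / c i ≤ s}

section CornerSimplex

variable {n : ℕ}

lemma convex_cornerSimplex (c : Fin n → ℝ) (s : ℝ) : Convex ℝ (cornerSimplex c s) := by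
  rintro x ⟨hx, hxs⟩ y ⟨hy, hys⟩ a b ha hb hab
  refine ⟨fun i => add_nonneg (mul_nonneg ha (hx i)) (mul_nonneg hb (hy i)), ?_⟩
  simp only [Pi.add_apply, Pi.smul_apply, smul_eq_mul, add_div, mul_div_assoc,
    Finset.sum_add_distrib, ← Finset.mul_sum]
  calc _ ≤ a * s + b * s :=
        add_le_add (mul_le_mul_of_nonneg_left hxs ha) (mul_le_mul_of_nonneg_left hys hb)
    _ = s := by rw [← add_mul, hab, one_mul]

lemma convexHull_insert_zero_range_single {c : Fin n → ℝ} (hc : ∀ i, 0 < c i) :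
    convexHull ℝ (insert 0 (Set.range fun i => Pi.single i (c i))) = cornerSimplex c 1 := by
  apply (convexHull_min _ (convex_cornerSimplex c 1)).antisymm
  · rintro x ⟨hx, hsum⟩
    let w : Option (Fin n) → ℝ := fun o => o.elim (1 - ∑ i, x i / c i) fun i => x i / c i
    let z : Option (Fin n) → Fin n → ℝ := fun o => o.elim 0 fun i => Pi.single i (c i)
    have hxz : ∑ o, w o • z o = x := by
      ext j
      simp [w, z, Fintype.sum_option, Finset.sum_apply, Pi.single_apply, (hc j).ne']
    rw [← hxz]
    refine (convex_convexHull ℝ _).sum_mem (fun o _ => ?_) ?_ (fun o _ => ?_)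
    · cases o
      · exact sub_nonneg.2 hsum
      · exact div_nonneg (hx _) (hc _).le
    · simp [w, Fintype.sum_option]
    · cases o
      · exact subset_convexHull ℝ _ (Set.mem_insert _ _)
      · exact subset_convexHull ℝ _ (Set.mem_insert_of_mem _ (Set.mem_range_self _))
  · rintro _ (rfl | ⟨i, rfl⟩)
    · simp [cornerSimplex]
    · refine ⟨fun j => ?_, ?_⟩
      · simp [Pi.single_apply, apply_ite, (hc i).le]
      · simp [Pi.single_apply, ite_div, (hc i).ne']

lemma interior_cornerSimplex {c : Fin n → ℝ} {i₀ : Fin n} (hc : c i₀ ≠ 0) (s : ℝ) :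
    interior (cornerSimplex c s) = {x | (∀ i, 0 < x i) ∧ ∑ i, x i / c i < s} := by
  let L : (Fin n → ℝ) →L[ℝ] ℝ := ∑ i, (c i)⁻¹ • ContinuousLinearMap.proj i
  have hL (x : Fin n → ℝ) : L x = ∑ i, x i / c i := by
    simp [L, div_eq_inv_mul]
  have hLsurj : Function.Surjective L := fun r =>
    ⟨Pi.single i₀ (r * c i₀), by simp [hL, Pi.single_apply, ite_div, hc]⟩
  have hsplit : cornerSimplex c s = Set.univ.pi (fun _ => Set.Ici 0) ∩ L ⁻¹' Set.Iic s := by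
    ext x
    simp only [cornerSimplex, hL, Set.mem_ofPred_eq, Set.mem_inter_iff, Set.mem_pi,
      Set.mem_univ, true_implies, Set.mem_Ici, Set.mem_preimage, Set.mem_Iic]
  rw [hsplit, interior_inter, interior_pi_set Set.finite_univ, L.interior_preimage hLsurj]
  ext x
  simp [hL]

lemma cornerSimplex_eq_empty {c : Fin n → ℝ} {s : ℝ} (hc : ∀ i, 0 ≤ c i) (hs : s < 0) :
    cornerSimplex c s = ∅ :=
  Set.eq_empty_of_forall_notMem fun _ ⟨hx, hsum⟩ =>
    hsum.not_gt (hs.trans_le (Finset.sum_nonneg fun i _ => div_nonneg (hx i) (hc i)))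

lemma mem_cornerSimplex_succ {c : Fin (n + 1) → ℝ} {s : ℝ} {x : Fin (n + 1) → ℝ} :
    x ∈ cornerSimplex c s ↔
      0 ≤ x 0 ∧ Fin.tail x ∈ cornerSimplex (Fin.tail c) (s - x 0 / c 0) := by
  simp only [cornerSimplex, Set.mem_ofPred_eq, Fin.forall_fin_succ, Fin.sum_univ_succ, Fin.tail,
    le_sub_iff_add_le', and_assoc]

lemma integral_Icc_sub_div_pow {a s : ℝ} (ha : 0 < a) (hs : 0 ≤ s) :
    ∫ t in Set.Icc 0 (s * a), (s - t / a) ^ n = a * s ^ (n + 1) / (n + 1) := by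
  rw [integral_Icc_eq_integral_Ioc, ← intervalIntegral.integral_of_le (by positivity),
    intervalIntegral.integral_comp_sub_div (fun x => x ^ n) ha.ne', integral_pow,
    mul_div_cancel_right₀ _ ha.ne']
  simp [mul_div_assoc]

lemma integral_Icc_volume_cornerSimplex_slice {c : Fin (n + 1) → ℝ} {s : ℝ} (hc0 : 0 < c 0)
    (hs : 0 ≤ s) :
    ∫ t in Set.Icc 0 (s * c 0), (s - t / c 0) ^ n * (∏ i, Fin.tail c i) / n.factorial
      = s ^ (n + 1) * (∏ i, c i) / (n + 1).factorial := by
  rw [integral_div, integral_mul_const, integral_Icc_sub_div_pow hc0 hs, Fin.prod_univ_succ,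
    Nat.factorial_succ]
  push_cast [Fin.tail]
  field_simp

lemma volume_cornerSimplex {c : Fin n → ℝ} {s : ℝ} (hc : ∀ i, 0 < c i) (hs : 0 ≤ s) :
    volume (cornerSimplex c s) = ENNReal.ofReal (s ^ n * (∏ i, c i) / n.factorial) := by
  induction n generalizing s with
  | zero =>
    rw [show cornerSimplex c s = Set.univ from
        Set.eq_univ_of_forall fun x => ⟨finZeroElim, by simpa⟩,
      ← Set.pi_univ, volume_pi_pi]
    simp
  | succ n ih =>
    have hc0 := hc 0
    set T : Set (ℝ × (Fin n → ℝ)) :=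
      {p | 0 ≤ p.1 ∧ p.2 ∈ cornerSimplex (Fin.tail c) (s - p.1 / c 0)}
    have hT : MeasurableSet T := by
      simp only [T, cornerSimplex]
      measurability
    have hslice (t : ℝ) : volume (Prod.mk t ⁻¹' T) = (Set.Icc 0 (s * c 0)).indicator
        (fun t => ENNReal.ofReal ((s - t / c 0) ^ n * (∏ i, Fin.tail c i) / n.factorial)) t := by
      by_cases ht : t ∈ Set.Icc 0 (s * c 0)
      · have hlevel : 0 ≤ s - t / c 0 := sub_nonneg.2 ((div_le_iff₀ hc0).2 ht.2)
        rw [Set.indicator_of_mem ht, ← ih (c := Fin.tail c) (fun i => hc i.succ) hlevel]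
        exact congrArg volume (Set.ext fun y => and_iff_right ht.1)
      · rw [Set.indicator_of_notMem ht, measure_eq_zero_iff_ae_notMem]
        refine Filter.Eventually.of_forall fun y ⟨ht0, hy⟩ => ?_
        have hlevel : s - t / c 0 < 0 :=
          sub_neg.2 ((lt_div_iff₀ hc0).2 (lt_of_not_ge fun h => ht ⟨ht0, h⟩))
        rwa [cornerSimplex_eq_empty (c := Fin.tail c) (fun i => (hc i.succ).le) hlevel] at hy
    rw [show cornerSimplex c s = MeasurableEquiv.piFinSuccAbove (fun _ => ℝ) 0 ⁻¹' T from
        Set.ext fun x => mem_cornerSimplex_succ,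
      (volume_preserving_piFinSuccAbove (fun _ => ℝ) 0).measure_preimage hT.nullMeasurableSet,
      Measure.volume_eq_prod, Measure.prod_apply hT]
    simp_rw [hslice]
    rw [lintegral_indicator measurableSet_Icc, ← integral_Icc_volume_cornerSimplex_slice hc0 hs,
      ofReal_integral_eq_lintegral_ofReal]
    · exact Continuous.integrableOn_Icc (by fun_prop)
    · filter_upwards [ae_restrict_mem measurableSet_Icc] with t ht
      have : 0 ≤ s - t / c 0 := sub_nonneg.2 ((div_le_iff₀ hc0).2 ht.2)
      have : 0 ≤ ∏ i, Fin.tail c i := Finset.prod_nonneg fun i _ => (hc i.succ).le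
      positivity

end CornerSimplex

noncomputable def zpwIntercepts (k : ℕ) : Fin 3 → ℝ := ![2, 3, 6 * (k : ℝ) + 6]

lemma zpwIntercepts_pos (k : ℕ) (i : Fin 3) : 0 < zpwIntercepts k i := by
  fin_cases i <;> simp [zpwIntercepts]; positivity

lemma zpw_vertices_eq (k : ℕ) :
    ({![0, 0, 0], ![2, 0, 0], ![0, 3, 0], ![0, 0, 6 * (k : ℝ) + 6]} : Set (Fin 3 → ℝ)) =
      insert 0 (Set.range fun i => Pi.single i (zpwIntercepts k i)) := by
  have : (fun i => Pi.single i (zpwIntercepts k i)) =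
      ![![2, 0, 0], ![0, 3, 0], ![0, 0, 6 * (k : ℝ) + 6]] := by
    ext i j; fin_cases i <;> fin_cases j <;> simp [zpwIntercepts]
  rw [this, Matrix.range_cons, Matrix.range_cons, Matrix.range_cons_empty,
    Set.singleton_union, Set.singleton_union]
  congr 1
  ext i; fin_cases i <;> rfl

lemma zpw_int_iff (k a b c : ℤ) (hk : 0 ≤ k) :
    (0 < a ∧ 0 < b ∧ 0 < c ∧ 3 * (k + 1) * a + 2 * (k + 1) * b + c < 6 * (k + 1)) ↔
      a = 1 ∧ b = 1 ∧ 1 ≤ c ∧ c ≤ k := by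
  constructor
  · rintro ⟨ha, hb, hc, h⟩
    have ha1 : a = 1 := by nlinarith
    have hb1 : b = 1 := by nlinarith
    subst ha1 hb1
    omega
  · rintro ⟨rfl, rfl, hc1, hck⟩
    omega

lemma toR_mem_interior_zpw_iff (k : ℕ) (x : Fin 3 → ℤ) :
    toR x ∈ interior (cornerSimplex (zpwIntercepts k) 1) ↔
      x 0 = 1 ∧ x 1 = 1 ∧ 1 ≤ x 2 ∧ x 2 ≤ (k : ℤ) := by
  rw [interior_cornerSimplex (zpwIntercepts_pos k 0).ne', Set.mem_ofPred_eq,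
    ← zpw_int_iff k _ _ _ (Int.natCast_nonneg k)]
  have hsum : (x 0 : ℝ) / 2 + x 1 / 3 + x 2 / (6 * k + 6) =
      ((3 * (k + 1) * x 0 + 2 * (k + 1) * x 1 + x 2 : ℤ) : ℝ) / ((6 * (k + 1) : ℤ) : ℝ) := by
    push_cast; field_simp; ring
  have hx (i : Fin 3) : (0 : ℝ) < x i ↔ 0 < x i := Int.cast_pos
  simp only [Fin.forall_fin_succ, IsEmpty.forall_iff, Fin.sum_univ_three, toR, zpwIntercepts,
    Matrix.cons_val, hsum, hx, div_lt_one (by positivity : (0 : ℝ) < ((6 * (k + 1) : ℤ) : ℝ)),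
    Int.cast_lt, Fin.succ_zero_eq_one, Fin.succ_one_eq_two, and_true, and_assoc]

lemma ncard_zpw_lattice (k : ℕ) :
    {x : Fin 3 → ℤ | x 0 = 1 ∧ x 1 = 1 ∧ 1 ≤ x 2 ∧ x 2 ≤ (k : ℤ)}.ncard = k := by
  have himg : {x : Fin 3 → ℤ | x 0 = 1 ∧ x 1 = 1 ∧ 1 ≤ x 2 ∧ x 2 ≤ (k : ℤ)}
      = (fun a : ℤ => ![1, 1, a]) '' Set.Icc 1 (k : ℤ) := by
    ext x
    constructor
    · rintro ⟨h0, h1, h2, h3⟩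
      refine ⟨x 2, ⟨h2, h3⟩, ?_⟩
      ext i; fin_cases i <;> simp [h0, h1]
    · rintro ⟨a, ⟨ha1, ha2⟩, rfl⟩
      exact ⟨rfl, rfl, ha1, ha2⟩
  rw [himg, Set.ncard_image_of_injective _ (fun a b hab => by simpa using congrFun hab 2),
    ← Finset.coe_Icc, Set.ncard_coe_finset, Int.card_Icc]
  simp

lemma volume_zpw (k : ℕ) :
    volume (cornerSimplex (zpwIntercepts k) 1) = ENNReal.ofReal (6 * ((k : ℝ) + 1)) := by
  rw [volume_cornerSimplex (zpwIntercepts_pos k) zero_le_one]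
  congr 1
  simp [Fin.prod_univ_three, zpwIntercepts, Nat.factorial]
  ring

theorem stmt13_general (k : ℕ)
    (P : Set (Fin 3 → ℝ))
    (hP : P = convexHull ℝ
      {![0, 0, 0], ![2, 0, 0], ![0, 3, 0], ![0, 0, 6 * (k : ℝ) + 6]}) :
    {x : Fin 3 → ℤ | toR x ∈ interior P} =
      {x : Fin 3 → ℤ | x 0 = 1 ∧ x 1 = 1 ∧ 1 ≤ x 2 ∧ x 2 ≤ (k : ℤ)} ∧
    {x : Fin 3 → ℤ | toR x ∈ interior P}.ncard = k ∧
    (6 : ℝ) * (volume P).toReal = 36 * ((k : ℝ) + 1) := by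
  have hPc : P = cornerSimplex (zpwIntercepts k) 1 := by
    rw [hP, zpw_vertices_eq, convexHull_insert_zero_range_single (zpwIntercepts_pos k)]
  have hlat : {x : Fin 3 → ℤ | toR x ∈ interior P} =
      {x : Fin 3 → ℤ | x 0 = 1 ∧ x 1 = 1 ∧ 1 ≤ x 2 ∧ x 2 ≤ (k : ℤ)} := by
    ext x
    rw [hPc]
    exact toR_mem_interior_zpw_iff k x
  refine ⟨hlat, hlat ▸ ncard_zpw_lattice k, ?_⟩
  rw [hPc, volume_zpw, ENNReal.toReal_ofReal (by positivity)]
  ring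

/-- The three-dimensional ZPW simplex
`S³_k = conv((0,0,0), (2,0,0), (0,3,0), (0,0,6k+6))` contains exactly `k`
interior lattice points, namely `(1,1,a)` for `1 ≤ a ≤ k`, and has normalized
volume `36(k+1)`. -/
theorem stmt13 (k : ℕ) (hk : 1 ≤ k)
    (P : Set (Fin 3 → ℝ))
    (hP : P = convexHull ℝ
      {![0, 0, 0], ![2, 0, 0], ![0, 3, 0], ![0, 0, 6 * (k : ℝ) + 6]}) :
    {x : Fin 3 → ℤ | toR x ∈ interior P} =
      {x : Fin 3 → ℤ | x 0 = 1 ∧ x 1 = 1 ∧ 1 ≤ x 2 ∧ x 2 ≤ (k : ℤ)} ∧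
    {x : Fin 3 → ℤ | toR x ∈ interior P}.ncard = k ∧
    (6 : ℝ) * (volume P).toReal = 36 * ((k : ℝ) + 1) :=
  stmt13_general k P hP
end

section
/- The three-dimensional ZPW simplex S³_k = conv((0,0,0), (2,0,0), (0,3,0), (0,0,6k+6)) contains exactly 16k + 23 lattice points. -/
open Finset in
theorem convexHull_insert_zero_range_single_s14 {ι : Type*} [Fintype ι] [DecidableEq ι]
    {a : ι → ℝ} (ha : ∀ i, 0 < a i) :
    convexHull ℝ (insert 0 (Set.range fun i => Pi.single i (a i))) =
      {p | (∀ i, 0 ≤ p i) ∧ ∑ i, p i / a i ≤ 1} := by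
  apply subset_antisymm
  · refine convexHull_min ?_ ?_
    · rintro _ (rfl | ⟨i, rfl⟩)
      · simp
      · refine ⟨fun j => ?_, ?_⟩
        · rcases eq_or_ne j i with rfl | hj
          · simpa using (ha j).le
          · simp [hj]
        · simp [Pi.single_apply, ite_div, (ha i).ne']
    · rintro p ⟨hp, hp1⟩ q ⟨hq, hq1⟩ s t hs ht hst
      refine ⟨fun i => add_nonneg (mul_nonneg hs (hp i)) (mul_nonneg ht (hq i)), ?_⟩
      calc ∑ i, (s • p + t • q) i / a i = s * ∑ i, p i / a i + t * ∑ i, q i / a i := by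
            simp only [Pi.add_apply, Pi.smul_apply, smul_eq_mul, add_div, mul_div_assoc,
              sum_add_distrib, mul_sum]
        _ ≤ s * 1 + t * 1 := by gcongr
        _ = 1 := by rw [mul_one, mul_one, hst]
  · rintro p ⟨hp, hp1⟩
    -- `p` is the convex combination of `0` and the `a i • e i` with weights `p i / a i`.
    let w : Option ι → ℝ := fun o => o.elim (1 - ∑ i, p i / a i) fun i => p i / a i
    let z : Option ι → ι → ℝ := fun o => o.elim 0 fun i => Pi.single i (a i)
    have hw : ∀ o ∈ univ, 0 ≤ w o := by
      rintro (_ | i) -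
      · simpa [w] using hp1
      · exact div_nonneg (hp i) (ha i).le
    have hw1 : ∑ o, w o = 1 := by simp [w, Fintype.sum_option]
    have hz : ∀ o ∈ univ,
        z o ∈ convexHull ℝ (insert 0 (Set.range fun i => Pi.single i (a i))) := by
      rintro (_ | i) - <;> apply subset_convexHull <;> simp [z]
    convert (convex_convexHull ℝ _).sum_mem hw hw1 hz
    ext j
    simp [w, z, Fintype.sum_option, Pi.single_apply, (ha j).ne']

theorem zpw_simplex_eq (k : ℕ) :
    convexHull ℝ {![0, 0, 0], ![2, 0, 0], ![0, 3, 0], ![0, 0, 6 * (k : ℝ) + 6]} =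
      {p : Fin 3 → ℝ | (∀ i, 0 ≤ p i) ∧
        (k + 1) * (3 * p 0 + 2 * p 1) + p 2 ≤ 6 * (k + 1)} := by
  have hvert :
      ({![0, 0, 0], ![2, 0, 0], ![0, 3, 0], ![0, 0, 6 * (k : ℝ) + 6]} : Set (Fin 3 → ℝ)) =
        insert 0 (Set.range fun i => Pi.single i (![2, 3, 6 * (k : ℝ) + 6] i)) := by
    have hsingle : (fun i => Pi.single i (![2, 3, 6 * (k : ℝ) + 6] i)) =
        ![![2, 0, 0], ![0, 3, 0], ![0, 0, 6 * (k : ℝ) + 6]] := by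
      ext i j
      fin_cases i <;> fin_cases j <;> rfl
    rw [hsingle, Matrix.range_cons, Matrix.range_cons, Matrix.range_cons_empty,
      Set.singleton_union, Set.singleton_union]
    congr 1
    ext i
    fin_cases i <;> rfl
  rw [hvert, convexHull_insert_zero_range_single_s14]
  · ext p
    have hsum : p 0 / 2 + p 1 / 3 + p 2 / (6 * k + 6) =
        ((k + 1) * (3 * p 0 + 2 * p 1) + p 2) / (6 * (k + 1)) := by
      field_simp
      ring
    simp only [Set.mem_ofPred_eq, Fin.sum_univ_three, Matrix.cons_val_zero, Matrix.cons_val_one,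
      Matrix.cons_val_two, Matrix.head_cons, Matrix.tail_cons, hsum]
    rw [div_le_one (by positivity)]
  · intro i
    fin_cases i <;> simp
    positivity

open Finset in
theorem ncard_lattice_points_under_graph (B : Finset (ℤ × ℤ)) (h : ℤ × ℤ → ℤ) :
    {x : Fin 3 → ℤ | (x 0, x 1) ∈ B ∧ 0 ≤ x 2 ∧ x 2 ≤ h (x 0, x 1)}.ncard =
      ∑ b ∈ B, (h b + 1).toNat := by
  let f : (Σ _ : ℤ × ℤ, ℤ) → Fin 3 → ℤ := fun s => ![s.1.1, s.1.2, s.2]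
  have hf : f.Injective := by
    rintro ⟨⟨a, b⟩, c⟩ ⟨⟨a', b'⟩, c'⟩ hx
    simp_all [f, funext_iff, Fin.forall_fin_succ]
  have hset : {x : Fin 3 → ℤ | (x 0, x 1) ∈ B ∧ 0 ≤ x 2 ∧ x 2 ≤ h (x 0, x 1)} =
      ((B.sigma fun b => Icc 0 (h b)).image f : Set (Fin 3 → ℤ)) := by
    ext x
    simp only [Set.mem_ofPred_eq, coe_image, Set.mem_image, mem_coe, mem_sigma, mem_Icc]
    constructor
    · intro hx
      refine ⟨⟨(x 0, x 1), x 2⟩, hx, ?_⟩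
      ext i
      fin_cases i <;> rfl
    · rintro ⟨⟨b, c⟩, hbc, rfl⟩
      exact hbc
  rw [hset, Set.ncard_coe_finset, card_image_of_injective _ hf, card_sigma]
  simp

def zpwBase : Finset (ℤ × ℤ) := {(0, 0), (0, 1), (0, 2), (0, 3), (1, 0), (1, 1), (2, 0)}

def zpwHeight (k : ℕ) (b : ℤ × ℤ) : ℤ := (k + 1) * (6 - 3 * b.1 - 2 * b.2)

theorem zpw_lattice_point_iff (k : ℕ) (x : Fin 3 → ℤ) :
    ((∀ i, 0 ≤ x i) ∧ (k + 1) * (3 * x 0 + 2 * x 1) + x 2 ≤ 6 * (k + 1)) ↔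
      (x 0, x 1) ∈ zpwBase ∧ 0 ≤ x 2 ∧ x 2 ≤ zpwHeight k (x 0, x 1) := by
  have hk : (0 : ℤ) < k + 1 := by positivity
  simp only [zpwHeight, Fin.forall_fin_succ, Fin.succ_zero_eq_one, Fin.succ_one_eq_two,
    IsEmpty.forall_iff, and_true, zpwBase, Finset.mem_insert, Finset.mem_singleton, Prod.mk.injEq]
  constructor
  · rintro ⟨⟨h0, h1, h2⟩, hle⟩
    have : 3 * x 0 + 2 * x 1 ≤ 6 := le_of_mul_le_mul_left (by linarith) hk
    exact ⟨by omega, h2, by linarith⟩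
  · rintro ⟨hb, h2, hle⟩
    exact ⟨⟨by omega, by omega, h2⟩, by linarith⟩

theorem sum_zpwHeight_add_one (k : ℕ) :
    ∑ b ∈ zpwBase, (zpwHeight k b + 1).toNat = 16 * k + 23 := by
  simp [zpwBase, zpwHeight]
  omega

theorem stmt14_general (k : ℕ)
    (P : Set (Fin 3 → ℝ))
    (hP : P = convexHull ℝ
      {![0, 0, 0], ![2, 0, 0], ![0, 3, 0], ![0, 0, 6 * (k : ℝ) + 6]}) :
    {x : Fin 3 → ℤ | toR x ∈ P}.ncard = 16 * k + 23 := by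
  have hlattice : {x : Fin 3 → ℤ | toR x ∈ P} =
      {x | (x 0, x 1) ∈ zpwBase ∧ 0 ≤ x 2 ∧ x 2 ≤ zpwHeight k (x 0, x 1)} := by
    ext x
    rw [Set.mem_ofPred_eq, hP, zpw_simplex_eq, Set.mem_ofPred_eq, Set.mem_ofPred_eq,
      ← zpw_lattice_point_iff]
    simp only [toR]
    exact_mod_cast Iff.rfl
  rw [hlattice, ncard_lattice_points_under_graph, sum_zpwHeight_add_one]

/-- The three-dimensional ZPW simplex
`S³_k = conv((0,0,0), (2,0,0), (0,3,0), (0,0,6k+6))` contains exactly `16k + 23`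
lattice points. -/
theorem stmt14 (k : ℕ) (hk : 1 ≤ k)
    (P : Set (Fin 3 → ℝ))
    (hP : P = convexHull ℝ
      {![0, 0, 0], ![2, 0, 0], ![0, 3, 0], ![0, 0, 6 * (k : ℝ) + 6]}) :
    {x : Fin 3 → ℤ | toR x ∈ P}.ncard = 16 * k + 23 :=
  stmt14_general k P hP
end

section
/- For each fixed integer h*₃ ≥ 2, the set of points (h*₁, h*₂) ∈ ℝ² satisfying (1) h*₃ ≤ h*₁, (2) h*₁ ≤ h*₂, (3) h*₂ ≤ 19h*₃ + 16, (4*) h*₂ - h*₁ ≤ 9h*₃ + 7, (5) 5h*₃h*₁ + 4h*₁ + 4 ≤ 4h*₃² + 4h*₃h*₂ + 5h*₂ is a pentagon with vertices (h*₃, h*₃), (4h*₃+4, 4h*₃+4), (16h*₃+19, 19h*₃+16), (10h*₃+9, 19h*₃+16), and (h*₃, 10h*₃+7). -/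
/-! For fixed `t = h₃`, inequality (5) reads `(5t + 4) x - (4t + 5) y ≤ 4t² - 4`, so the region
is an intersection of five half-planes, hence convex; it contains the five vertices `A, …, E`, so
it contains their convex hull. Conversely, the diagonals `AC` and `AD` cut the region into the
triangles `ABC`, `ACD`, `ADE`, and each point of the region is written explicitly as a convex
combination of the vertices of a triangle containing it. Finally each vertex is exposed: some
line leaves it strictly on one side and the other four vertices on the other. -/

open Set

theorem mem_convexHull_of_triple {𝕜 E : Type*} [Field 𝕜] [LinearOrder 𝕜]
    [IsStrictOrderedRing 𝕜] [AddCommGroup E] [Module 𝕜 E] {s : Set E} {x y z : E}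
    (hx : x ∈ s) (hy : y ∈ s) (hz : z ∈ s) {a b c : 𝕜}
    (ha : 0 ≤ a) (hb : 0 ≤ b) (hc : 0 ≤ c) (habc : a + b + c = 1) :
    a • x + b • y + c • z ∈ convexHull 𝕜 s := by
  have h := (convex_convexHull 𝕜 s).sum_mem (t := Finset.univ) (w := ![a, b, c])
    (z := ![x, y, z])
    (by intro i _; fin_cases i <;> assumption) (by simp [Fin.sum_univ_three, habc])
    (by intro i _; fin_cases i <;> exact subset_convexHull 𝕜 s ‹_›)
  simpa [Fin.sum_univ_three] using h

def halfPlane (a b c : ℝ) : Set (ℝ × ℝ) := {p | a * p.1 + b * p.2 ≤ c}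

theorem convex_halfPlane (a b c : ℝ) : Convex ℝ (halfPlane a b c) :=
  convex_halfSpace_le (a • LinearMap.fst ℝ ℝ ℝ + b • LinearMap.snd ℝ ℝ ℝ).isLinear c

theorem notMem_convexHull_of_subset_halfPlane {s : Set (ℝ × ℝ)} {a b c : ℝ} {v : ℝ × ℝ}
    (hs : s ⊆ halfPlane a b c) (hv : c < a * v.1 + b * v.2) : v ∉ convexHull ℝ s :=
  fun h => hv.not_ge (convexHull_min hs (convex_halfPlane a b c) h)

def pentagonRegion (t : ℝ) : Set (ℝ × ℝ) :=
  {p | t ≤ p.1 ∧ p.1 ≤ p.2 ∧ p.2 ≤ 19 * t + 16 ∧ p.2 - p.1 ≤ 9 * t + 7 ∧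
    5 * t * p.1 + 4 * p.1 + 4 ≤ 4 * t ^ 2 + 4 * t * p.2 + 5 * p.2}

-- The vertices `A, B, C, D, E`, in this order.
noncomputable def pentagonVertices (t : ℝ) : Finset (ℝ × ℝ) :=
  {(t, t), (4 * t + 4, 4 * t + 4), (16 * t + 19, 19 * t + 16), (10 * t + 9, 19 * t + 16),
    (t, 10 * t + 7)}

variable {t : ℝ}

theorem pentagonRegion_eq_inter (t : ℝ) :
    pentagonRegion t = halfPlane (-1) 0 (-t) ∩ halfPlane 1 (-1) 0 ∩
      halfPlane 0 1 (19 * t + 16) ∩ halfPlane (-1) 1 (9 * t + 7) ∩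
      halfPlane (5 * t + 4) (-(4 * t + 5)) (4 * t ^ 2 - 4) := by
  ext p
  simp only [pentagonRegion, halfPlane, mem_inter_iff, mem_ofPred_eq]
  constructor
  · rintro ⟨h1, h2, h3, h4, h5⟩
    exact ⟨⟨⟨⟨by linarith, by linarith⟩, by linarith⟩, by linarith⟩, by linarith⟩
  · rintro ⟨⟨⟨⟨h1, h2⟩, h3⟩, h4⟩, h5⟩
    exact ⟨by linarith, by linarith, by linarith, by linarith, by linarith⟩

theorem convex_pentagonRegion (t : ℝ) : Convex ℝ (pentagonRegion t) := by
  rw [pentagonRegion_eq_inter]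
  exact ((((convex_halfPlane _ _ _).inter (convex_halfPlane _ _ _)).inter
    (convex_halfPlane _ _ _)).inter (convex_halfPlane _ _ _)).inter (convex_halfPlane _ _ _)

theorem pentagonVertices_subset_pentagonRegion (ht : 1 < t) :
    (pentagonVertices t : Set (ℝ × ℝ)) ⊆ pentagonRegion t := by
  intro v hv
  simp only [pentagonVertices, Finset.coe_insert, Finset.coe_singleton, mem_insert_iff,
    mem_singleton_iff] at hv
  rcases hv with rfl | rfl | rfl | rfl | rfl <;>
    refine ⟨?_, ?_, ?_, ?_, ?_⟩ <;> dsimp only <;> nlinarith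

theorem card_pentagonVertices (ht : 1 < t) : (pentagonVertices t).card = 5 := by
  rw [pentagonVertices, Finset.card_insert_of_notMem, Finset.card_insert_of_notMem,
    Finset.card_insert_of_notMem, Finset.card_pair] <;>
    simp only [Finset.mem_insert, Finset.mem_singleton, Prod.ext_iff, ne_eq, not_or, not_and] <;>
    (repeat' constructor) <;> intros <;> linarith

theorem mem_convexHull_of_below_AC (ht : 1 < t) {p : ℝ × ℝ} (hp : p ∈ pentagonRegion t)
    (hAC : (15 * t + 19) * (p.2 - t) ≤ (18 * t + 16) * (p.1 - t)) :
    p ∈ convexHull ℝ (pentagonVertices t) := by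
  obtain ⟨x, y⟩ := p
  obtain ⟨-, h2, -, -, h5⟩ := hp
  have hd₁ : t - 1 ≠ 0 := by linarith
  have hd₂ : 3 * t + 4 ≠ 0 := by linarith
  have h := mem_convexHull_of_triple (s := pentagonVertices t) (x := (t, t))
    (y := (4 * t + 4, 4 * t + 4)) (z := (16 * t + 19, 19 * t + 16))
    (by simp [pentagonVertices]) (by simp [pentagonVertices]) (by simp [pentagonVertices])
    (a := ((3 * t + 4) * (3 * t - 3) - ((18 * t + 16) * (x - t) - (15 * t + 19) * (y - t))
      - (3 * t + 4) * (y - x)) / ((3 * t + 4) * (3 * t - 3)))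
    (b := ((18 * t + 16) * (x - t) - (15 * t + 19) * (y - t)) / ((3 * t + 4) * (3 * t - 3)))
    (c := (y - x) / (3 * t - 3))
    (div_nonneg (by nlinarith) (by nlinarith)) (div_nonneg (by linarith) (by nlinarith))
    (div_nonneg (by linarith) (by linarith)) (by field_simp; ring)
  convert h using 1
  ext <;> simp only [Prod.smul_mk, Prod.mk_add_mk, smul_eq_mul] <;> field_simp <;> ring

theorem mem_convexHull_of_between_AC_AD (ht : 1 < t) {p : ℝ × ℝ} (hp : p ∈ pentagonRegion t)
    (hAC : (18 * t + 16) * (p.1 - t) ≤ (15 * t + 19) * (p.2 - t))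
    (hAD : (9 * t + 9) * (p.2 - t) ≤ (18 * t + 16) * (p.1 - t)) :
    p ∈ convexHull ℝ (pentagonVertices t) := by
  obtain ⟨x, y⟩ := p
  obtain ⟨-, -, h3, -, -⟩ := hp
  have hd₁ : 18 * t + 16 ≠ 0 := by linarith
  have hd₂ : 6 * t + 10 ≠ 0 := by linarith
  have h := mem_convexHull_of_triple (s := pentagonVertices t) (x := (t, t))
    (y := (16 * t + 19, 19 * t + 16)) (z := (10 * t + 9, 19 * t + 16))
    (by simp [pentagonVertices]) (by simp [pentagonVertices]) (by simp [pentagonVertices])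
    (a := (18 * t + 16 - (y - t)) / (18 * t + 16))
    (b := ((18 * t + 16) * (x - t) - (9 * t + 9) * (y - t)) / ((18 * t + 16) * (6 * t + 10)))
    (c := ((15 * t + 19) * (y - t) - (18 * t + 16) * (x - t)) / ((18 * t + 16) * (6 * t + 10)))
    (div_nonneg (by linarith) (by linarith)) (div_nonneg (by linarith) (by positivity))
    (div_nonneg (by linarith) (by positivity)) (by field_simp; ring)
  convert h using 1
  ext <;> simp only [Prod.smul_mk, Prod.mk_add_mk, smul_eq_mul] <;> field_simp <;> ring

theorem mem_convexHull_of_above_AD (ht : 1 < t) {p : ℝ × ℝ} (hp : p ∈ pentagonRegion t)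
    (hAD : (18 * t + 16) * (p.1 - t) ≤ (9 * t + 9) * (p.2 - t)) :
    p ∈ convexHull ℝ (pentagonVertices t) := by
  obtain ⟨x, y⟩ := p
  obtain ⟨h1, -, -, h4, -⟩ := hp
  have hd₁ : 9 * t + 9 ≠ 0 := by linarith
  have hd₂ : 9 * t + 7 ≠ 0 := by linarith
  have h := mem_convexHull_of_triple (s := pentagonVertices t) (x := (t, t))
    (y := (10 * t + 9, 19 * t + 16)) (z := (t, 10 * t + 7))
    (by simp [pentagonVertices]) (by simp [pentagonVertices]) (by simp [pentagonVertices])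
    (a := (9 * t + 7 - (y - x)) / (9 * t + 7))
    (b := (x - t) / (9 * t + 9))
    (c := ((9 * t + 9) * (y - t) - (18 * t + 16) * (x - t)) / ((9 * t + 9) * (9 * t + 7)))
    (div_nonneg (by linarith) (by linarith)) (div_nonneg (by linarith) (by linarith))
    (div_nonneg (by linarith) (by positivity)) (by field_simp; ring)
  convert h using 1
  ext <;> simp only [Prod.smul_mk, Prod.mk_add_mk, smul_eq_mul] <;> field_simp <;> ring

theorem pentagonRegion_eq_convexHull (ht : 1 < t) :
    pentagonRegion t = convexHull ℝ (pentagonVertices t) := by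
  refine (convexHull_min (pentagonVertices_subset_pentagonRegion ht)
    (convex_pentagonRegion t)).antisymm' fun p hp => ?_
  rcases le_total ((15 * t + 19) * (p.2 - t)) ((18 * t + 16) * (p.1 - t)) with hAC | hAC
  · exact mem_convexHull_of_below_AC ht hp hAC
  rcases le_total ((9 * t + 9) * (p.2 - t)) ((18 * t + 16) * (p.1 - t)) with hAD | hAD
  · exact mem_convexHull_of_between_AC_AD ht hp hAC hAD
  · exact mem_convexHull_of_above_AD ht hp hAD

theorem notMem_convexHull_erase_pentagonVertices (ht : 1 < t) :
    ∀ v ∈ pentagonVertices t,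
      v ∉ convexHull ℝ ((pentagonVertices t).erase v : Set (ℝ × ℝ)) := by
  have exposed : ∀ {v : ℝ × ℝ} (a b c : ℝ),
      (∀ w ∈ pentagonVertices t, w ≠ v → a * w.1 + b * w.2 ≤ c) → c < a * v.1 + b * v.2 →
      v ∉ convexHull ℝ ((pentagonVertices t).erase v : Set (ℝ × ℝ)) :=
    fun a b c hw hv => notMem_convexHull_of_subset_halfPlane
      (fun w hw' => hw w (Finset.mem_of_mem_erase hw') (Finset.ne_of_mem_erase hw')) hv
  intro v hv
  simp only [pentagonVertices, Finset.mem_insert, Finset.mem_singleton] at hv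
  rcases hv with rfl | rfl | rfl | rfl | rfl <;> [
    refine exposed (-1) (-1) (-4 * t) ?_ (by dsimp only; linarith);
    refine exposed (5 * t + 5) (-(4 * t + 6)) (4 * t ^ 2 - 3 * t - 1) ?_
      (by dsimp only; nlinarith);
    refine exposed (5 * t + 4) (-(4 * t + 4)) (4 * t ^ 2 + 10 * t + 12) ?_
      (by dsimp only; nlinarith);
    refine exposed (-1) 2 (25 * t + 18) ?_ (by dsimp only; linarith);
    refine exposed (-2) 1 0 ?_ (by dsimp only; linarith)]
  all_goals
    intro w hw hne
    simp only [pentagonVertices, Finset.mem_insert, Finset.mem_singleton] at hw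
    rcases hw with rfl | rfl | rfl | rfl | rfl <;>
      first | exact absurd rfl hne | (dsimp only; nlinarith)

/-- For each fixed integer `h₃ ≥ 2`, the region in the `(h₁, h₂)`-plane cut out by
the inequalities (1) `h₃ ≤ h₁`, (2) `h₁ ≤ h₂`, (3) `h₂ ≤ 19h₃ + 16`,
(4*) `h₂ - h₁ ≤ 9h₃ + 7`, (5) `5h₃h₁ + 4h₁ + 4 ≤ 4h₃² + 4h₃h₂ + 5h₂`
is a pentagon with vertices `(h₃, h₃)`, `(4h₃+4, 4h₃+4)`, `(16h₃+19, 19h₃+16)`,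
`(10h₃+9, 19h₃+16)` and `(h₃, 10h₃+7)`. -/
theorem stmt17 (h3 : ℤ) (hh3 : 2 ≤ h3)
    (S : Set (ℝ × ℝ))
    (hS : S = {p : ℝ × ℝ | (h3 : ℝ) ≤ p.1 ∧ p.1 ≤ p.2 ∧
      p.2 ≤ 19 * (h3 : ℝ) + 16 ∧ p.2 - p.1 ≤ 9 * (h3 : ℝ) + 7 ∧
      5 * (h3 : ℝ) * p.1 + 4 * p.1 + 4 ≤
        4 * (h3 : ℝ) ^ 2 + 4 * (h3 : ℝ) * p.2 + 5 * p.2})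
    (vs : Finset (ℝ × ℝ))
    (hvs : vs = {((h3 : ℝ), (h3 : ℝ)),
      (4 * (h3 : ℝ) + 4, 4 * (h3 : ℝ) + 4),
      (16 * (h3 : ℝ) + 19, 19 * (h3 : ℝ) + 16),
      (10 * (h3 : ℝ) + 9, 19 * (h3 : ℝ) + 16),
      ((h3 : ℝ), 10 * (h3 : ℝ) + 7)}) :
    S = convexHull ℝ (vs : Set (ℝ × ℝ)) ∧ vs.card = 5 ∧
    ∀ v ∈ vs, v ∉ convexHull ℝ ((vs.erase v : Finset (ℝ × ℝ)) : Set (ℝ × ℝ)) := by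
  have ht : (1 : ℝ) < h3 := by exact_mod_cast hh3
  subst hS hvs
  exact ⟨pentagonRegion_eq_convexHull ht, card_pentagonVertices ht,
    notMem_convexHull_erase_pentagonVertices ht⟩
end
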